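/- arXiv:alg-geom/9503023 — 11 statements merged into one kernel-verified Lean document; each statement's English description precedes it below -/
import Mathlib

section
/- Let g ≥ 2 be an integer, R a commutative ℚ-algebra and δ₁, δ₂, δ₃ ∈ R elements satisfying the three relations. Then F(u,v,w) = 0 for all non-negative integers u, v, w with u+v+w even and u+v+w ≥ 6g−4. -/
/-- `F α β γ u v w` is the sum of `α^u' β^v' γ^w'` over all six permutations
`(u',v',w')` of `(u,v,w)`. -/
def F {R : Type*} [CommRing R] (α β γ : R) (u v w : ℕ) : R :=
  α ^ u * β ^ v * γ ^ w + α ^ v * β ^ w * γ ^ u + α ^ w * β ^ u * γ ^ v +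
  α ^ u * β ^ w * γ ^ v + α ^ v * β ^ u * γ ^ w + α ^ w * β ^ v * γ ^ u

section spanlemmas
variable {R : Type*} [CommRing R]

lemma span_shift {S T : Set R} (c : R) (h : ∀ x ∈ S, c*x ∈ T) :
    ∀ x ∈ Ideal.span S, c*x ∈ Ideal.span T := by
  intro x hx
  induction hx using Submodule.span_induction with
  | mem y hy => exact Ideal.subset_span (h y hy)
  | zero => simp
  | add y z _ _ hy' hz' => rw [mul_add]; exact add_mem hy' hz'
  | smul r y _ hy' =>
      rw [smul_eq_mul, mul_left_comm]; exact Ideal.mul_mem_left _ r hy'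

lemma span_kill {S : Set R} (c : R) (h : ∀ x ∈ S, c*x = 0) :
    ∀ x ∈ Ideal.span S, c*x = 0 := by
  intro x hx
  induction hx using Submodule.span_induction with
  | mem y hy => exact h y hy
  | zero => simp
  | add y z _ _ hy' hz' => rw [mul_add, hy', hz', add_zero]
  | smul r y _ hy' => rw [smul_eq_mul, mul_left_comm, hy', mul_zero]

end spanlemmas

section uvw
variable {R : Type*} [CommRing R]

lemma rec3 (U V W : R) (he2 : U*V + V*W + W*U = 0) (k : ℕ) :
    U^(k+3) + V^(k+3) + W^(k+3) =
      (U+V+W) * (U^(k+2) + V^(k+2) + W^(k+2)) + (U*V*W) * (U^k + V^k + W^k) := by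
  linear_combination (-(U^(k+1) + V^(k+1) + W^(k+1))) * he2

lemma pzero (g : ℕ) (U V W : R)
    (hU : U^(2*g) = 0) (hV : V^(2*g) = 0) (hW : W^(2*g) = 0)
    (hp : U^(2*g-1) + V^(2*g-1) + W^(2*g-1) = 0)
    (k : ℕ) (hk : 2*g-1 ≤ k) : U^k + V^k + W^k = 0 := by
  rcases Nat.lt_or_ge k (2*g) with h | h
  · have : k = 2*g-1 := by omega
    rw [this]; exact hp
  · obtain ⟨r, rfl⟩ := Nat.exists_eq_add_of_le h
    rw [pow_add, pow_add, pow_add, hU, hV, hW]; ring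

lemma mp3 (g : ℕ) (U V W : R) (he2 : U*V + V*W + W*U = 0)
    (hU : U^(2*g) = 0) (hV : V^(2*g) = 0) (hW : W^(2*g) = 0)
    (hp : U^(2*g-1) + V^(2*g-1) + W^(2*g-1) = 0) :
    ∀ j t : ℕ, j + t + 1 = g →
    (U*V*W)^j * (U^(2*t+1) + V^(2*t+1) + W^(2*t+1)) = 0 ∧
    (U*V*W)^j * (U^(2*t+2) + V^(2*t+2) + W^(2*t+2)) = 0 ∧
    (U*V*W)^j * (U^(2*t+3) + V^(2*t+3) + W^(2*t+3)) = 0 := by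
  intro j
  induction j with
  | zero =>
      intro t ht
      have e1 := pzero g U V W hU hV hW hp (2*t+1) (by omega)
      have e2' := pzero g U V W hU hV hW hp (2*t+2) (by omega)
      have e3' := pzero g U V W hU hV hW hp (2*t+3) (by omega)
      refine ⟨?_, ?_, ?_⟩ <;> simp [e1, e2', e3']
  | succ j IH =>
      intro t ht
      obtain ⟨ha, hb, hc⟩ := IH (t+1) (by omega)
      have ha' : (U*V*W)^j * (U^(2*t+3) + V^(2*t+3) + W^(2*t+3)) = 0 := by
        have h' : 2*(t+1)+1 = 2*t+3 := by omega
        rwa [h'] at ha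
      have hb' : (U*V*W)^j * (U^(2*t+4) + V^(2*t+4) + W^(2*t+4)) = 0 := by
        have h' : 2*(t+1)+2 = 2*t+4 := by omega
        rwa [h'] at hb
      have hc' : (U*V*W)^j * (U^(2*t+5) + V^(2*t+5) + W^(2*t+5)) = 0 := by
        have h' : 2*(t+1)+3 = 2*t+5 := by omega
        rwa [h'] at hc
      refine ⟨?_, ?_, ?_⟩
      · linear_combination (-(U*V*W)^j) * rec3 U V W he2 (2*t+1) + hb' - (U+V+W) * ha'
      · linear_combination (-(U*V*W)^j) * rec3 U V W he2 (2*t+2) + hc' - (U+V+W) * hb'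
      · linear_combination (U*V*W) * ha'

lemma ps0 (U V W : R) (he2 : U*V + V*W + W*U = 0) : ∀ K : ℕ, U^K + V^K + W^K ∈
    Ideal.span {x : R | ∃ p q : ℕ, p + 3*q = K ∧ x = (U+V+W)^p * (U*V*W)^q} := by
  intro K
  induction K using Nat.strong_induction_on with
  | _ K IH =>
    match K with
    | 0 =>
        have e : U^0 + V^0 + W^0 = 3 * ((U+V+W)^0 * (U*V*W)^0) := by ring
        rw [e]
        exact Ideal.mul_mem_left _ _ (Ideal.subset_span ⟨0, 0, by omega, rfl⟩)
    | 1 =>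
        have e : U^1 + V^1 + W^1 = (U+V+W)^1 * (U*V*W)^0 := by ring
        rw [e]
        exact Ideal.subset_span ⟨1, 0, by omega, rfl⟩
    | 2 =>
        have e : U^2 + V^2 + W^2 = (U+V+W)^2 * (U*V*W)^0 := by
          linear_combination (-2 : R) * he2
        rw [e]
        exact Ideal.subset_span ⟨2, 0, by omega, rfl⟩
    | (k+3) =>
        rw [rec3 U V W he2 k]
        refine add_mem ?_ ?_
        · refine span_shift (U+V+W) ?_ _ (IH (k+2) (by omega))
          rintro x ⟨p, q, hpq, rfl⟩
          exact ⟨p+1, q, by omega, by ring⟩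
        · refine span_shift (U*V*W) ?_ _ (IH k (by omega))
          rintro x ⟨p, q, hpq, rfl⟩
          exact ⟨p, q+1, by omega, by ring⟩

lemma ps1 (U V W : R) (he2 : U*V + V*W + W*U = 0) : ∀ K : ℕ, 1 ≤ K →
    U^K + V^K + W^K - (U+V+W)^K ∈
    Ideal.span {x : R | ∃ p q : ℕ, p + 3*q = K ∧ 1 ≤ q ∧ x = (U+V+W)^p * (U*V*W)^q} := by
  intro K
  induction K using Nat.strong_induction_on with
  | _ K IH =>
    match K with
    | 0 => intro h; omega
    | 1 =>
        intro _
        have e : U^1 + V^1 + W^1 - (U+V+W)^1 = 0 := by ring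
        rw [e]; exact zero_mem _
    | 2 =>
        intro _
        have e : U^2 + V^2 + W^2 - (U+V+W)^2 = 0 := by linear_combination (-2 : R) * he2
        rw [e]; exact zero_mem _
    | 3 =>
        intro _
        have e : U^3 + V^3 + W^3 - (U+V+W)^3 = 3 * ((U+V+W)^0 * (U*V*W)^1) := by
          linear_combination (-3*(U+V+W)) * he2
        rw [e]
        exact Ideal.mul_mem_left _ _ (Ideal.subset_span ⟨0, 1, by omega, by omega, rfl⟩)
    | (k+4) =>
        intro _
        have key : U^(k+4) + V^(k+4) + W^(k+4) - (U+V+W)^(k+4) =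
            (U+V+W) * (U^(k+3) + V^(k+3) + W^(k+3) - (U+V+W)^(k+3)) +
            (U*V*W) * (U^(k+1) + V^(k+1) + W^(k+1)) := by
          linear_combination rec3 U V W he2 (k+1)
        rw [key]
        refine add_mem ?_ ?_
        · refine span_shift (U+V+W) ?_ _ (IH (k+3) (by omega) (by omega))
          rintro x ⟨p, q, hpq, hq, rfl⟩
          exact ⟨p+1, q, by omega, hq, by ring⟩
        · refine span_shift (U*V*W) ?_ _ (ps0 U V W he2 (k+1))
          rintro x ⟨p, q, hpq, rfl⟩
          exact ⟨p, q+1, by omega, by omega, by ring⟩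

lemma Zlem (g : ℕ) (U V W : R) (he2 : U*V + V*W + W*U = 0)
    (hU : U^(2*g) = 0) (hV : V^(2*g) = 0) (hW : W^(2*g) = 0)
    (hp : U^(2*g-1) + V^(2*g-1) + W^(2*g-1) = 0)
    (hmg : (U*V*W)^g = 0) :
    ∀ t f : ℕ, f + t + 1 = g → (U+V+W)^(3*t+1) * (U*V*W)^f = 0 := by
  intro t
  induction t using Nat.strong_induction_on with
  | _ t IHt =>
    intro f hf
    have h1 := (mp3 g U V W he2 hU hV hW hp f t (by omega)).1
    have h2 := ps1 U V W he2 (2*t+1) (by omega)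
    have h3 : ((U+V+W)^t * (U*V*W)^f) *
        (U^(2*t+1) + V^(2*t+1) + W^(2*t+1) - (U+V+W)^(2*t+1)) = 0 := by
      refine span_kill _ ?_ _ h2
      rintro x ⟨p, q, hpq, hq, rfl⟩
      have e : (U+V+W)^t * (U*V*W)^f * ((U+V+W)^p * (U*V*W)^q) =
          (U+V+W)^(t+p) * (U*V*W)^(f+q) := by
        rw [pow_add, pow_add]; ring
      rcases Nat.lt_or_ge (f+q) g with hfq | hfq
      · rw [e, show t+p = 3*(t-q)+1 by omega]
        exact IHt (t-q) (by omega) (f+q) (by omega)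
      · obtain ⟨r, hr⟩ := Nat.exists_eq_add_of_le hfq
        rw [e, hr, pow_add (U*V*W) g r, hmg]; ring
    linear_combination ((U+V+W)^t) * h1 - h3

lemma KILL (g : ℕ) (U V W : R) (he2 : U*V + V*W + W*U = 0)
    (hU : U^(2*g) = 0) (hV : V^(2*g) = 0) (hW : W^(2*g) = 0)
    (hp : U^(2*g-1) + V^(2*g-1) + W^(2*g-1) = 0)
    (hmg : (U*V*W)^g = 0) :
    ∀ i q : ℕ, 3*g ≤ i + 3*q + 2 → (U+V+W)^i * (U*V*W)^q = 0 := by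
  intro i q h
  rcases Nat.lt_or_ge q g with hq | hq
  · obtain ⟨t, ht⟩ : ∃ t, q + t + 1 = g := ⟨g - q - 1, by omega⟩
    obtain ⟨r, hr⟩ : ∃ r, i = (3*t+1) + r := ⟨i - (3*t+1), by omega⟩
    rw [hr, pow_add]
    linear_combination ((U+V+W)^r) * Zlem g U V W he2 hU hV hW hp hmg t q ht
  · obtain ⟨r, hr⟩ := Nat.exists_eq_add_of_le hq
    rw [hr, pow_add, hmg]; ring

end uvw

/-- the set of symmetric monomials `e2^i e3^j` of weighted degree `d`. -/
def SymSet {R : Type*} [CommRing R] (a b c : R) (d : ℕ) : Set R :=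
  {x | ∃ i j : ℕ, 2*i + 3*j = d ∧ x = (a*b + b*c + c*a)^i * (a*b*c)^j}

section sym
set_option linter.unusedSectionVars false
variable {R : Type*} [CommRing R] [Algebra ℚ R] (a b c : R)

lemma mul_e2_mem {d : ℕ} {x : R} (hx : x ∈ Ideal.span (SymSet a b c d)) :
    (a*b + b*c + c*a) * x ∈ Ideal.span (SymSet a b c (d+2)) := by
  refine span_shift _ ?_ x hx
  rintro y ⟨i, j, hij, rfl⟩
  exact ⟨i+1, j, by omega, by ring⟩

lemma mul_e3_mem {d : ℕ} {x : R} (hx : x ∈ Ideal.span (SymSet a b c d)) :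
    (a*b*c) * x ∈ Ideal.span (SymSet a b c (d+3)) := by
  refine span_shift _ ?_ x hx
  rintro y ⟨i, j, hij, rfl⟩
  exact ⟨i, j+1, by omega, by ring⟩

lemma symF_pure (habc : a + b + c = 0) :
    ∀ d : ℕ, F a b c d 0 0 ∈ Ideal.span (SymSet a b c d) := by
  intro d
  induction d using Nat.strong_induction_on with
  | _ d IH =>
    match d with
    | 0 =>
        have e : F a b c 0 0 0 = 6 * ((a*b + b*c + c*a)^0 * (a*b*c)^0) := by unfold F; ring
        rw [e]
        exact Ideal.mul_mem_left _ _ (Ideal.subset_span ⟨0, 0, by omega, rfl⟩)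
    | 1 =>
        have e : F a b c 1 0 0 = 0 := by unfold F; linear_combination (2:R) * habc
        rw [e]; exact zero_mem _
    | 2 =>
        have e : F a b c 2 0 0 = (-4) * ((a*b + b*c + c*a)^1 * (a*b*c)^0) := by
          unfold F; linear_combination (2*(a+b+c)) * habc
        rw [e]
        exact Ideal.mul_mem_left _ _ (Ideal.subset_span ⟨1, 0, by omega, rfl⟩)
    | (k+3) =>
        have key : F a b c (k+3) 0 0 =
            -((a*b + b*c + c*a) * F a b c (k+1) 0 0) + (a*b*c) * F a b c k 0 0 := by
          unfold F
          linear_combination (2*(a^(k+2) + b^(k+2) + c^(k+2))) * habc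
        rw [key]
        exact add_mem (neg_mem (mul_e2_mem a b c (IH (k+1) (by omega))))
          (mul_e3_mem a b c (IH k (by omega)))

lemma symF_two (habc : a + b + c = 0) :
    ∀ d x y : ℕ, x + y = d → F a b c x y 0 ∈ Ideal.span (SymSet a b c d) := by
  intro d
  induction d using Nat.strong_induction_on with
  | _ d IH =>
    have half_mul : ∀ z : R, (algebraMap ℚ R (1/2)) * (2 * z) = z := by
      intro z
      have h2 : (algebraMap ℚ R) (2:ℚ) = (2:R) := map_ofNat _ 2
      rw [← mul_assoc, ← h2, ← map_mul]
      norm_num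
    have claimY1 : ∀ X, X + 1 = d → F a b c X 1 0 ∈ Ideal.span (SymSet a b c d) := by
      intro X hX
      match X with
      | 0 =>
          rw [show F a b c 0 1 0 = F a b c 1 0 0 by unfold F; ring, ← hX]
          exact symF_pure a b c habc 1
      | 1 =>
          have e : F a b c 1 1 0 = 2 * ((a*b + b*c + c*a)^1 * (a*b*c)^0) := by
            unfold F; ring
          rw [e]
          exact Ideal.mul_mem_left _ _ (Ideal.subset_span ⟨1, 0, by omega, rfl⟩)
      | (X'+2) =>
          have key : (2:R) * F a b c (X'+2) 1 0 =
              (a*b + b*c + c*a) * F a b c (X'+1) 0 0 - (a*b*c) * F a b c X' 0 0 := by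
            unfold F; ring
          have hmem : (a*b + b*c + c*a) * F a b c (X'+1) 0 0 - (a*b*c) * F a b c X' 0 0 ∈
              Ideal.span (SymSet a b c d) := by
            refine sub_mem ?_ ?_
            · have := mul_e2_mem a b c (symF_pure a b c habc (X'+1))
              rwa [show X'+1+2 = d by omega] at this
            · have := mul_e3_mem a b c (symF_pure a b c habc X')
              rwa [show X'+3 = d by omega] at this
          have e : F a b c (X'+2) 1 0 =
              (algebraMap ℚ R (1/2)) * ((2:R) * F a b c (X'+2) 1 0) := by
            rw [half_mul]
          rw [e, key]
          exact Ideal.mul_mem_left _ _ hmem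
    intro x y hd
    match x, y with
    | x, 0 =>
        have hx : x = d := by omega
        subst hx
        exact symF_pure a b c habc x
    | 0, y =>
        rw [show F a b c 0 y 0 = F a b c y 0 0 by unfold F; ring]
        have hy : y = d := by omega
        subst hy
        exact symF_pure a b c habc y
    | x, 1 => exact claimY1 x (by omega)
    | 1, (y'+2) =>
        rw [show F a b c 1 (y'+2) 0 = F a b c (y'+2) 1 0 by unfold F; ring]
        exact claimY1 (y'+2) (by omega)
    | (x'+2), (y'+2) =>
        have key : F a b c (x'+2) (y'+2) 0 =
            (a*b + b*c + c*a) * F a b c (x'+1) (y'+1) 0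
            - (a*b*c) * F a b c (x'+1) y' 0 - (a*b*c) * F a b c x' (y'+1) 0 := by
          unfold F; ring
        rw [key]
        refine sub_mem (sub_mem ?_ ?_) ?_
        · have := mul_e2_mem a b c (IH (x'+y'+2) (by omega) (x'+1) (y'+1) (by omega))
          rwa [show x'+y'+2+2 = d by omega] at this
        · have := mul_e3_mem a b c (IH (x'+y'+1) (by omega) (x'+1) y' (by omega))
          rwa [show x'+y'+1+3 = d by omega] at this
        · have := mul_e3_mem a b c (IH (x'+y'+1) (by omega) x' (y'+1) (by omega))
          rwa [show x'+y'+1+3 = d by omega] at this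

lemma symF_main (habc : a + b + c = 0) :
    ∀ d u v w : ℕ, u + v + w = d → F a b c u v w ∈ Ideal.span (SymSet a b c d) := by
  intro d
  induction d using Nat.strong_induction_on with
  | _ d IH =>
    intro u v w hd
    match u, v, w with
    | u, v, 0 => exact symF_two a b c habc d u v (by omega)
    | u, 0, (w'+1) =>
        rw [show F a b c u 0 (w'+1) = F a b c u (w'+1) 0 by unfold F; ring]
        exact symF_two a b c habc d u (w'+1) (by omega)
    | 0, (v'+1), (w'+1) =>
        rw [show F a b c 0 (v'+1) (w'+1) = F a b c (v'+1) (w'+1) 0 by unfold F; ring]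
        exact symF_two a b c habc d (v'+1) (w'+1) (by omega)
    | (u'+1), (v'+1), (w'+1) =>
        have key : F a b c (u'+1) (v'+1) (w'+1) = (a*b*c) * F a b c u' v' w' := by
          unfold F; ring
        rw [key]
        have := mul_e3_mem a b c (IH (u'+v'+w') (by omega) u' v' w' (by omega))
        rwa [show u'+v'+w'+3 = d by omega] at this

end sym

theorem stmt_0 (g : ℕ) (hg : 2 ≤ g) (R : Type*) [CommRing R] [Algebra ℚ R]
    (δ₁ δ₂ δ₃ : R)
    (h1 : ((δ₁ - δ₂) * (δ₂ - δ₃)) ^ (2 * g - 1) + ((δ₂ - δ₃) * (δ₃ - δ₁)) ^ (2 * g - 1) +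
      ((δ₃ - δ₁) * (δ₁ - δ₂)) ^ (2 * g - 1) = 0)
    (h2 : (δ₁ + δ₃) * ((δ₁ - δ₂) * (δ₂ - δ₃)) ^ (2 * g - 1) +
      (δ₂ + δ₁) * ((δ₂ - δ₃) * (δ₃ - δ₁)) ^ (2 * g - 1) +
      (δ₃ + δ₂) * ((δ₃ - δ₁) * (δ₁ - δ₂)) ^ (2 * g - 1) = 0)
    (h3 : δ₁ * δ₃ * ((δ₁ - δ₂) * (δ₂ - δ₃)) ^ (2 * g - 1) +
      δ₂ * δ₁ * ((δ₂ - δ₃) * (δ₃ - δ₁)) ^ (2 * g - 1) +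
      δ₃ * δ₂ * ((δ₃ - δ₁) * (δ₁ - δ₂)) ^ (2 * g - 1) = 0)
    (u v w : ℕ) (heven : Even (u + v + w)) (hbig : 6 * g - 4 ≤ u + v + w) :
    F (δ₁ - δ₂) (δ₂ - δ₃) (δ₃ - δ₁) u v w = 0 := by
  have hgsucc : 2*g = (2*g-1) + 1 := by omega
  -- the three pairwise products
  have hUg : ((δ₁ - δ₂) * (δ₂ - δ₃))^(2*g) = 0 := by
    rw [hgsucc, pow_succ]
    linear_combination δ₂ * h2 - δ₂^2 * h1 - h3
  have hVg : ((δ₂ - δ₃) * (δ₃ - δ₁))^(2*g) = 0 := by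
    rw [hgsucc, pow_succ]
    linear_combination δ₃ * h2 - δ₃^2 * h1 - h3
  have hWg : ((δ₃ - δ₁) * (δ₁ - δ₂))^(2*g) = 0 := by
    rw [hgsucc, pow_succ]
    linear_combination δ₁ * h2 - δ₁^2 * h1 - h3
  have he2' : ((δ₁ - δ₂) * (δ₂ - δ₃)) * ((δ₂ - δ₃) * (δ₃ - δ₁)) +
      ((δ₂ - δ₃) * (δ₃ - δ₁)) * ((δ₃ - δ₁) * (δ₁ - δ₂)) +
      ((δ₃ - δ₁) * (δ₁ - δ₂)) * ((δ₁ - δ₂) * (δ₂ - δ₃)) = 0 := by ring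
  have hmg : (((δ₁ - δ₂) * (δ₂ - δ₃)) * ((δ₂ - δ₃) * (δ₃ - δ₁)) *
      ((δ₃ - δ₁) * (δ₁ - δ₂)))^g = 0 := by
    rw [show ((δ₁ - δ₂) * (δ₂ - δ₃)) * ((δ₂ - δ₃) * (δ₃ - δ₁)) * ((δ₃ - δ₁) * (δ₁ - δ₂)) =
      (((δ₁ - δ₂) * (δ₂ - δ₃)) * (δ₃ - δ₁))^2 by ring, ← pow_mul, mul_pow, hUg, zero_mul]
  have hsym := symF_main (δ₁ - δ₂) (δ₂ - δ₃) (δ₃ - δ₁) (by ring) (u+v+w) u v w rfl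
  obtain ⟨k, hk⟩ := heven
  have hbot : Ideal.span (SymSet (δ₁ - δ₂) (δ₂ - δ₃) (δ₃ - δ₁) (u+v+w)) ≤ ⊥ := by
    rw [Ideal.span_le]
    rintro x ⟨i, j, hij, rfl⟩
    rw [SetLike.mem_coe, Submodule.mem_bot]
    obtain ⟨q, hq⟩ : ∃ q, j = 2*q := ⟨j/2, by omega⟩
    have e : ((δ₁ - δ₂) * (δ₂ - δ₃) * (δ₃ - δ₁))^j =
        (((δ₁ - δ₂) * (δ₂ - δ₃)) * ((δ₂ - δ₃) * (δ₃ - δ₁)) * ((δ₃ - δ₁) * (δ₁ - δ₂)))^q := by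
      rw [hq, pow_mul]
      rw [show ((δ₁ - δ₂) * (δ₂ - δ₃) * (δ₃ - δ₁))^2 =
        ((δ₁ - δ₂) * (δ₂ - δ₃)) * ((δ₂ - δ₃) * (δ₃ - δ₁)) * ((δ₃ - δ₁) * (δ₁ - δ₂)) by ring]
    rw [e]
    exact KILL g _ _ _ he2' hUg hVg hWg h1 hmg i q (by omega)
  exact (Submodule.mem_bot R).mp (hbot hsym)
end

section
/- Let R be a commutative ring, α, β, γ ∈ R with α+β+γ = 0, and g ≥ 1 an integer. Suppose F(2g−1+r, 2g−1+s, t) = 0 for all non-negative integers r, s, t with r+s+t even. Then F(u,v,w) = 0 for all non-negative integers u, v, w with u+v+w even and u+v+w ≥ 6g−4. -/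
lemma F_swap12 {R : Type*} [CommRing R] (α β γ : R) (u v w : ℕ) :
    F α β γ u v w = F α β γ v u w := by unfold F; ring

lemma F_swap23 {R : Type*} [CommRing R] (α β γ : R) (u v w : ℕ) :
    F α β γ u v w = F α β γ u w v := by unfold F; ring

lemma F_swap13 {R : Type*} [CommRing R] (α β γ : R) (u v w : ℕ) :
    F α β γ u v w = F α β γ w v u := by unfold F; ring

lemma F_key {R : Type*} [CommRing R] (α β γ : R) (hsum : α + β + γ = 0) (u v w : ℕ) :
    F α β γ (u + 1) v w = -F α β γ u v (w + 1) - F α β γ u (v + 1) w := by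
  have hγ : γ = -α - β := by linear_combination hsum
  subst hγ
  simp only [F, pow_succ]
  ring

theorem stmt_1 (R : Type*) [CommRing R] (α β γ : R) (hsum : α + β + γ = 0)
    (g : ℕ) (hg : 1 ≤ g)
    (h : ∀ r s t : ℕ, Even (r + s + t) → F α β γ (2 * g - 1 + r) (2 * g - 1 + s) t = 0)
    (u v w : ℕ) (heven : Even (u + v + w)) (hbig : 6 * g - 4 ≤ u + v + w) :
    F α β γ u v w = 0 := by
  have base : ∀ u v w : ℕ, 2 * g - 1 ≤ u → 2 * g - 1 ≤ v → Even (u + v + w) →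
      F α β γ u v w = 0 := by
    intro u v w hu hv hev
    obtain ⟨r, rfl⟩ : ∃ r, u = 2 * g - 1 + r := ⟨u - (2 * g - 1), by omega⟩
    obtain ⟨s, rfl⟩ : ∃ s, v = 2 * g - 1 + s := ⟨v - (2 * g - 1), by omega⟩
    apply h
    rw [Nat.even_iff] at hev ⊢
    omega
  have main : ∀ n u v w : ℕ, max u (max v w) ≤ n → Even (u + v + w) →
      6 * g - 4 ≤ u + v + w → F α β γ u v w = 0 := by
    intro n
    induction n with
    | zero => intro u v w hmax hev hbig; omega
    | succ n ih =>
      have sorted : ∀ u v w : ℕ, w ≤ v → v ≤ u → u ≤ n + 1 → Even (u + v + w) →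
          6 * g - 4 ≤ u + v + w → F α β γ u v w = 0 := by
        intro u v w hwv hvu hun hev hbig
        by_cases hv : 2 * g - 1 ≤ v
        · exact base u v w (le_trans hv hvu) hv hev
        · have hu : 2 * g ≤ u := by omega
          obtain ⟨u', rfl⟩ : ∃ u', u = u' + 1 := ⟨u - 1, by omega⟩
          rw [F_key α β γ hsum]
          rw [ih u' v (w + 1) (by omega) (by rw [Nat.even_iff] at hev ⊢; omega)
              (by omega)]
          rw [ih u' (v + 1) w (by omega) (by rw [Nat.even_iff] at hev ⊢; omega)
              (by omega)]
          ring
      intro u v w hmax hev hbig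
      have hev' := hev
      rw [Nat.even_iff] at hev'
      rcases le_total u v with h1 | h1 <;> rcases le_total v w with h2 | h2 <;>
        rcases le_total u w with h3 | h3
      · rw [F_swap13]
        exact sorted w v u h1 h2 (by omega) (by rw [Nat.even_iff]; omega) (by omega)
      · rw [F_swap13]
        exact sorted w v u h1 h2 (by omega) (by rw [Nat.even_iff]; omega) (by omega)
      · rw [F_swap12, F_swap23]
        exact sorted v w u (by omega) h2 (by omega) (by rw [Nat.even_iff]; omega) (by omega)
      · rw [F_swap12]
        exact sorted v u w h3 h1 (by omega) (by rw [Nat.even_iff]; omega) (by omega)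
      · rw [F_swap23, F_swap12]
        exact sorted w u v h1 h3 (by omega) (by rw [Nat.even_iff]; omega) (by omega)
      · rw [F_swap23]
        exact sorted u w v h2 h3 (by omega) (by rw [Nat.even_iff]; omega) (by omega)
      · exact sorted u v w h2 h1 (by omega) hev hbig
      · exact sorted u v w h2 h1 (by omega) hev hbig
  exact main (u + v + w) u v w (by omega) heven hbig
end

section
/- Let g ≥ 1 be an integer, R a commutative ℚ-algebra and δ₁, δ₂, δ₃ ∈ R elements satisfying the three relations. Then F(2g−1+r, 2g−1+s, t) = 0 for all non-negative integers r, s, t with r+s+t even. -/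
section Aux

variable {R : Type*} [CommRing R]

lemma F_swap (a b c : R) (u v w : ℕ) : F a b c u v w = F a b c v u w := by
  simp only [F]; ring

lemma F_rec (a b c : R) (hsum : a + b + c = 0) (u v w : ℕ) :
    F a b c (u + 1) v w + F a b c u (v + 1) w + F a b c u v (w + 1) = 0 := by
  simp only [F]
  linear_combination (a^u*b^v*c^w + a^v*b^w*c^u + a^w*b^u*c^v + a^u*b^w*c^v +
    a^v*b^u*c^w + a^w*b^v*c^u) * hsum

/-- odd power sums are multiples of `a*b*c` when `a+b+c = 0`. -/
lemma podd (a b c : R) (hsum : a + b + c = 0) (k : ℕ) :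
    ∃ q : R, a ^ (2*k+1) + b ^ (2*k+1) + c ^ (2*k+1) = a * b * c * q := by
  induction k with
  | zero => exact ⟨0, by linear_combination hsum⟩
  | succ k ih =>
    obtain ⟨q, hq⟩ := ih
    refine ⟨(a^(2*k) + b^(2*k) + c^(2*k)) - (a*b + b*c + a*c) * q, ?_⟩
    have h23 : 2*(k+1)+1 = 2*k+3 := by omega
    rw [h23]
    linear_combination (a^(2*k+2) + b^(2*k+2) + c^(2*k+2)) * hsum - (a*b + b*c + a*c) * hq

lemma L1 (a b c : R) (n : ℕ)
    (hE1 : a^(n+1) * b^(n+1) = 0) (hE2 : b^(n+1) * c^(n+1) = 0)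
    (hE3 : c^(n+1) * a^(n+1) = 0) (r s t : ℕ) :
    F a b c (n+1+r) (n+1+s) t = 0 := by
  simp only [F]
  linear_combination (a^r*b^s*c^t + a^s*b^r*c^t) * hE1 +
    (b^r*c^s + b^s*c^r) * a^t * hE2 + (c^r*a^s + c^s*a^r) * b^t * hE3

lemma LQ (a b c : R) (n : ℕ) (hsum : a + b + c = 0)
    (hB : a^(n+1) * b^n = c^(n+1) * b^n)
    (hC : b^(n+1) * c^n = a^(n+1) * c^n)
    (hD : b^(n+1) * a^n = c^(n+1) * a^n)
    (hE1 : a^(n+1) * b^(n+1) = 0) (hE2 : b^(n+1) * c^(n+1) = 0)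
    (k : ℕ) : F a b c n (n+1) (2*k+1) = 0 := by
  obtain ⟨q, hp⟩ := podd a b c hsum k
  simp only [F]
  linear_combination (a^n*b^(n+1) + a^(n+1)*b^n + b^(n+1)*c^n) * hp
    + q * ((b*c + a*c) * hE1 + a*b * hE2)
    - (a^(2*k) + b^(2*k)) * hE1 - c^(2*k) * hE2
    - b^(2*k+1) * hD - a^(2*k+1) * hB - b^(2*k+1) * hC

lemma Laux (a b c : R) (n : ℕ) (hsum : a + b + c = 0)
    (h1 : a^n * b^n + b^n * c^n + c^n * a^n = 0)
    (hB : a^(n+1) * b^n = c^(n+1) * b^n)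
    (hC : b^(n+1) * c^n = a^(n+1) * c^n)
    (hD : b^(n+1) * a^n = c^(n+1) * a^n)
    (hE1 : a^(n+1) * b^(n+1) = 0) (hE2 : b^(n+1) * c^(n+1) = 0)
    (hE3 : c^(n+1) * a^(n+1) = 0) :
    ∀ s t : ℕ, Even (s + t) → F a b c n (n + s) t = 0 := by
  intro s
  induction s using Nat.strong_induction_on with
  | _ s ih =>
    intro t ht
    match s with
    | 0 =>
      -- t even
      match t with
      | 0 =>
        simp only [F]
        linear_combination (2 : R) * h1
      | (t' + 1) =>
        obtain ⟨k, hk⟩ : ∃ k, t' = 2*k+1 := by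
          obtain ⟨p, hp⟩ := ht; exact ⟨(t' - 1)/2, by omega⟩
        have hrec := F_rec a b c hsum n n t'
        have hswap := F_swap a b c (n+1) n t'
        have hz : F a b c n (n+1) t' = 0 := by
          rw [hk]; exact LQ a b c n hsum hB hC hD hE1 hE2 k
        have : F a b c n (n+0) (t'+1) = 0 := by
          have hn0 : n + 0 = n := by omega
          rw [hn0]
          linear_combination hrec - hswap - (2 : R) * hz
        simpa using this
    | 1 =>
      obtain ⟨k, hk⟩ : ∃ k, t = 2*k+1 := by
        obtain ⟨p, hp⟩ := ht; exact ⟨(t - 1)/2, by omega⟩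
      rw [hk]
      exact LQ a b c n hsum hB hC hD hE1 hE2 k
    | (m + 2) =>
      have hrec := F_rec a b c hsum n (n + (m+1)) t
      have hz1 : F a b c (n+1) (n + (m+1)) t = 0 := by
        have : n + (m+1) = n + 1 + m := by omega
        rw [this]
        exact L1 a b c n hE1 hE2 hE3 0 m t
      have hz2 : F a b c n (n + (m+1)) (t+1) = 0 := by
        refine ih (m+1) (by omega) (t+1) ?_
        obtain ⟨p, hp⟩ := ht; exact ⟨p, by omega⟩
      have hidx : n + (m+2) = n + (m+1) + 1 := by omega
      rw [hidx]
      linear_combination hrec - hz1 - hz2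

lemma Lmain (a b c : R) (n : ℕ) (hsum : a + b + c = 0)
    (h1 : a^n * b^n + b^n * c^n + c^n * a^n = 0)
    (hB : a^(n+1) * b^n = c^(n+1) * b^n)
    (hC : b^(n+1) * c^n = a^(n+1) * c^n)
    (hD : b^(n+1) * a^n = c^(n+1) * a^n)
    (hE1 : a^(n+1) * b^(n+1) = 0) (hE2 : b^(n+1) * c^(n+1) = 0)
    (hE3 : c^(n+1) * a^(n+1) = 0)
    (r s t : ℕ) (heven : Even (r + s + t)) :
    F a b c (n + r) (n + s) t = 0 := by
  match r, s with
  | 0, s =>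
    have hn0 : n + 0 = n := by omega
    rw [hn0]
    exact Laux a b c n hsum h1 hB hC hD hE1 hE2 hE3 s t (by simpa using heven)
  | (r' + 1), 0 =>
    rw [F_swap]
    have hn0 : n + 0 = n := by omega
    rw [hn0]
    refine Laux a b c n hsum h1 hB hC hD hE1 hE2 hE3 (r'+1) t ?_
    obtain ⟨p, hp⟩ := heven; exact ⟨p, by omega⟩
  | (r' + 1), (s' + 1) =>
    have e1 : n + (r' + 1) = n + 1 + r' := by omega
    have e2 : n + (s' + 1) = n + 1 + s' := by omega
    rw [e1, e2]
    exact L1 a b c n hE1 hE2 hE3 r' s' t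

end Aux

theorem stmt_2 (g : ℕ) (hg : 1 ≤ g) (R : Type*) [CommRing R] [Algebra ℚ R]
    (δ₁ δ₂ δ₃ : R)
    (h1 : ((δ₁ - δ₂) * (δ₂ - δ₃)) ^ (2 * g - 1) + ((δ₂ - δ₃) * (δ₃ - δ₁)) ^ (2 * g - 1) +
      ((δ₃ - δ₁) * (δ₁ - δ₂)) ^ (2 * g - 1) = 0)
    (h2 : (δ₁ + δ₃) * ((δ₁ - δ₂) * (δ₂ - δ₃)) ^ (2 * g - 1) +
      (δ₂ + δ₁) * ((δ₂ - δ₃) * (δ₃ - δ₁)) ^ (2 * g - 1) +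
      (δ₃ + δ₂) * ((δ₃ - δ₁) * (δ₁ - δ₂)) ^ (2 * g - 1) = 0)
    (h3 : δ₁ * δ₃ * ((δ₁ - δ₂) * (δ₂ - δ₃)) ^ (2 * g - 1) +
      δ₂ * δ₁ * ((δ₂ - δ₃) * (δ₃ - δ₁)) ^ (2 * g - 1) +
      δ₃ * δ₂ * ((δ₃ - δ₁) * (δ₁ - δ₂)) ^ (2 * g - 1) = 0)
    (r s t : ℕ) (heven : Even (r + s + t)) :
    F (δ₁ - δ₂) (δ₂ - δ₃) (δ₃ - δ₁) (2 * g - 1 + r) (2 * g - 1 + s) t = 0 := by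
  simp only [mul_pow] at h1 h2 h3
  have hsum : (δ₁ - δ₂) + (δ₂ - δ₃) + (δ₃ - δ₁) = 0 := by ring
  have hB : (δ₁ - δ₂)^(2*g-1+1) * (δ₂ - δ₃)^(2*g-1) =
      (δ₃ - δ₁)^(2*g-1+1) * (δ₂ - δ₃)^(2*g-1) := by
    linear_combination (-δ₂ - δ₃) * h1 + h2
  have hC : (δ₂ - δ₃)^(2*g-1+1) * (δ₃ - δ₁)^(2*g-1) =
      (δ₁ - δ₂)^(2*g-1+1) * (δ₃ - δ₁)^(2*g-1) := by
    linear_combination (-δ₁ - δ₃) * h1 + h2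
  have hD : (δ₂ - δ₃)^(2*g-1+1) * (δ₁ - δ₂)^(2*g-1) =
      (δ₃ - δ₁)^(2*g-1+1) * (δ₁ - δ₂)^(2*g-1) := by
    linear_combination (δ₁ + δ₂) * h1 - h2
  have hE1 : (δ₁ - δ₂)^(2*g-1+1) * (δ₂ - δ₃)^(2*g-1+1) = 0 := by
    linear_combination (-1 : R) * h3 + δ₂ * (δ₁ + δ₂ + δ₃) * h1 - δ₂ * h2 + δ₂ * hB - δ₂ * hD
  have hE2 : (δ₂ - δ₃)^(2*g-1+1) * (δ₃ - δ₁)^(2*g-1+1) = 0 := by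
    linear_combination hE1 - (δ₂ - δ₃) * hB
  have hE3 : (δ₃ - δ₁)^(2*g-1+1) * (δ₁ - δ₂)^(2*g-1+1) = 0 := by
    linear_combination hE1 - (δ₁ - δ₂) * hD
  exact Lmain (δ₁ - δ₂) (δ₂ - δ₃) (δ₃ - δ₁) (2*g-1) hsum h1 hB hC hD hE1 hE2 hE3 r s t heven
end

section
/- Let g ≥ 1 be an integer, R a commutative ring and δ₁, δ₂, δ₃ ∈ R elements satisfying the three relations. Then for every integer k ≥ 0: δ₂^k T₁ + δ₃^k T₂ + δ₁^k T₃ = 0. -/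
theorem stmt_3 (g : ℕ) (hg : 1 ≤ g) (R : Type*) [CommRing R]
    (δ₁ δ₂ δ₃ : R)
    (h1 : ((δ₁ - δ₂) * (δ₂ - δ₃)) ^ (2 * g - 1) + ((δ₂ - δ₃) * (δ₃ - δ₁)) ^ (2 * g - 1) +
      ((δ₃ - δ₁) * (δ₁ - δ₂)) ^ (2 * g - 1) = 0)
    (h2 : (δ₁ + δ₃) * ((δ₁ - δ₂) * (δ₂ - δ₃)) ^ (2 * g - 1) +
      (δ₂ + δ₁) * ((δ₂ - δ₃) * (δ₃ - δ₁)) ^ (2 * g - 1) +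
      (δ₃ + δ₂) * ((δ₃ - δ₁) * (δ₁ - δ₂)) ^ (2 * g - 1) = 0)
    (h3 : δ₁ * δ₃ * ((δ₁ - δ₂) * (δ₂ - δ₃)) ^ (2 * g - 1) +
      δ₂ * δ₁ * ((δ₂ - δ₃) * (δ₃ - δ₁)) ^ (2 * g - 1) +
      δ₃ * δ₂ * ((δ₃ - δ₁) * (δ₁ - δ₂)) ^ (2 * g - 1) = 0)
    (k : ℕ) :
    δ₂ ^ k * ((δ₁ - δ₂) * (δ₂ - δ₃)) ^ (2 * g - 1) +
      δ₃ ^ k * ((δ₂ - δ₃) * (δ₃ - δ₁)) ^ (2 * g - 1) +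
      δ₁ ^ k * ((δ₃ - δ₁) * (δ₁ - δ₂)) ^ (2 * g - 1) = 0 := by
  induction k using Nat.strong_induction_on with
  | _ k ih =>
    match k with
    | 0 => simpa using h1
    | 1 => linear_combination (δ₁ + δ₂ + δ₃) * h1 - h2
    | 2 => linear_combination ((δ₁ + δ₂ + δ₃) ^ 2 - (δ₁ * δ₂ + δ₂ * δ₃ + δ₃ * δ₁)) * h1
        - (δ₁ + δ₂ + δ₃) * h2 + h3
    | (n + 3) =>
      have H0 := ih n (by omega)
      have H1 := ih (n + 1) (by omega)
      have H2 := ih (n + 2) (by omega)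
      linear_combination (δ₁ + δ₂ + δ₃) * H2 - (δ₁ * δ₂ + δ₂ * δ₃ + δ₃ * δ₁) * H1
        + (δ₁ * δ₂ * δ₃) * H0
end

section
/- Let g ≥ 1 be an integer, R a commutative ring and δ₁, δ₂, δ₃ ∈ R elements satisfying the three relations. Then for all integers k, l ≥ 0: γ^{2l} δ₂^k T₁ + α^{2l} δ₃^k T₂ + β^{2l} δ₁^k T₃ = 0. -/
private lemma stmt_4_aux {R : Type*} [CommRing R] (x y z T₁ T₂ T₃ : R)
    (h0 : T₁ + T₂ + T₃ = 0)
    (hS1 : x * T₁ + y * T₂ + z * T₃ = 0)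
    (hS2 : x ^ 2 * T₁ + y ^ 2 * T₂ + z ^ 2 * T₃ = 0) :
    ∀ k : ℕ, x ^ k * T₁ + y ^ k * T₂ + z ^ k * T₃ = 0
  | 0 => by simpa using h0
  | 1 => by simpa using hS1
  | 2 => hS2
  | (k + 3) => by
    have i0 := stmt_4_aux x y z T₁ T₂ T₃ h0 hS1 hS2 k
    have i1 := stmt_4_aux x y z T₁ T₂ T₃ h0 hS1 hS2 (k + 1)
    have i2 := stmt_4_aux x y z T₁ T₂ T₃ h0 hS1 hS2 (k + 2)
    linear_combination (x + y + z) * i2 - (x * y + y * z + z * x) * i1 + (x * y * z) * i0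

theorem stmt_4 (g : ℕ) (hg : 1 ≤ g) (R : Type*) [CommRing R]
    (δ₁ δ₂ δ₃ : R)
    (h1 : ((δ₁ - δ₂) * (δ₂ - δ₃)) ^ (2 * g - 1) + ((δ₂ - δ₃) * (δ₃ - δ₁)) ^ (2 * g - 1) +
      ((δ₃ - δ₁) * (δ₁ - δ₂)) ^ (2 * g - 1) = 0)
    (h2 : (δ₁ + δ₃) * ((δ₁ - δ₂) * (δ₂ - δ₃)) ^ (2 * g - 1) +
      (δ₂ + δ₁) * ((δ₂ - δ₃) * (δ₃ - δ₁)) ^ (2 * g - 1) +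
      (δ₃ + δ₂) * ((δ₃ - δ₁) * (δ₁ - δ₂)) ^ (2 * g - 1) = 0)
    (h3 : δ₁ * δ₃ * ((δ₁ - δ₂) * (δ₂ - δ₃)) ^ (2 * g - 1) +
      δ₂ * δ₁ * ((δ₂ - δ₃) * (δ₃ - δ₁)) ^ (2 * g - 1) +
      δ₃ * δ₂ * ((δ₃ - δ₁) * (δ₁ - δ₂)) ^ (2 * g - 1) = 0)
    (k l : ℕ) :
    (δ₃ - δ₁) ^ (2 * l) * δ₂ ^ k * ((δ₁ - δ₂) * (δ₂ - δ₃)) ^ (2 * g - 1) +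
      (δ₁ - δ₂) ^ (2 * l) * δ₃ ^ k * ((δ₂ - δ₃) * (δ₃ - δ₁)) ^ (2 * g - 1) +
      (δ₂ - δ₃) ^ (2 * l) * δ₁ ^ k * ((δ₃ - δ₁) * (δ₁ - δ₂)) ^ (2 * g - 1) = 0 := by
  set T₁ := ((δ₁ - δ₂) * (δ₂ - δ₃)) ^ (2 * g - 1) with hT₁
  set T₂ := ((δ₂ - δ₃) * (δ₃ - δ₁)) ^ (2 * g - 1) with hT₂
  set T₃ := ((δ₃ - δ₁) * (δ₁ - δ₂)) ^ (2 * g - 1) with hT₃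
  have hS1 : δ₂ * T₁ + δ₃ * T₂ + δ₁ * T₃ = 0 := by
    linear_combination (δ₁ + δ₂ + δ₃) * h1 - h2
  have hS2 : δ₂ ^ 2 * T₁ + δ₃ ^ 2 * T₂ + δ₁ ^ 2 * T₃ = 0 := by
    linear_combination h3 - (δ₁ * δ₂ + δ₂ * δ₃ + δ₃ * δ₁) * h1 + (δ₁ + δ₂ + δ₃) * hS1
  have aux := stmt_4_aux δ₂ δ₃ δ₁ T₁ T₂ T₃ h1 hS1 hS2
  clear hS1 hS2 h1 h2 h3 hg
  induction l generalizing k with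
  | zero => simpa using aux k
  | succ l ih =>
    have i0 := ih k
    have i1 := ih (k + 1)
    have i2 := ih (k + 2)
    have e2 : 2 * (l + 1) = 2 * l + 2 := by ring
    rw [e2, pow_add, pow_add, pow_add]
    linear_combination ((δ₁ + δ₂ + δ₃) ^ 2 - 4 * (δ₁ * δ₂ + δ₂ * δ₃ + δ₃ * δ₁)) * i0 +
      (2 * (δ₁ + δ₂ + δ₃)) * i1 - 3 * i2
end

section
/- In the polynomial ring ℚ[δ₁, δ₂, δ₃] set a₁ = δ₁+δ₂+δ₃, α = δ₁−δ₂, β = δ₂−δ₃, γ = δ₃−δ₁. For all non-negative integers r, s, t with r+s+t even, the polynomial (α^r β^s + α^s β^r) γ^t lies in the ℚ-subalgebra of ℚ[δ₁, δ₂, δ₃] generated by a₁, δ₂ and γ². -/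
open MvPolynomial

private noncomputable def A3 : Subalgebra ℚ (MvPolynomial (Fin 3) ℚ) :=
  Algebra.adjoin ℚ {(X 0 + X 1 + X 2 : MvPolynomial (Fin 3) ℚ), X 1, (X 2 - X 0) ^ 2}

private lemma ha1 : (X 0 + X 1 + X 2 : MvPolynomial (Fin 3) ℚ) ∈ A3 :=
  Algebra.subset_adjoin (by simp)

private lemma hX1 : (X 1 : MvPolynomial (Fin 3) ℚ) ∈ A3 :=
  Algebra.subset_adjoin (by simp)

private lemma hg2 : ((X 2 - X 0 : MvPolynomial (Fin 3) ℚ)) ^ 2 ∈ A3 :=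
  Algebra.subset_adjoin (by simp)

private lemma hab : (X 0 - X 1 : MvPolynomial (Fin 3) ℚ) * (X 1 - X 2) ∈ A3 := by
  have key : (X 0 - X 1 : MvPolynomial (Fin 3) ℚ) * (X 1 - X 2) =
      (1/4 : ℚ) • ((X 2 - X 0) ^ 2 - (X 0 + X 1 + X 2 - (X 1 + X 1 + X 1)) ^ 2) := by
    rw [smul_eq_C_mul]
    have h4 : (C (1/4 : ℚ) : MvPolynomial (Fin 3) ℚ) * 4 = 1 := by
      rw [show (4 : MvPolynomial (Fin 3) ℚ) = C 4 from (map_ofNat C 4).symm, ← C_mul]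
      norm_num
    linear_combination (-((X 0 - X 1 : MvPolynomial (Fin 3) ℚ) * (X 1 - X 2))) * h4
  rw [key]
  exact A3.smul_mem (A3.sub_mem hg2 (A3.pow_mem (A3.sub_mem ha1
    (A3.add_mem (A3.add_mem hX1 hX1) hX1)) 2)) _

private lemma hp : ∀ n : ℕ,
    (Even n → (X 0 - X 1 : MvPolynomial (Fin 3) ℚ) ^ n + (X 1 - X 2) ^ n ∈ A3) ∧
    (Odd n → (X 2 - X 0) * ((X 0 - X 1 : MvPolynomial (Fin 3) ℚ) ^ n + (X 1 - X 2) ^ n) ∈ A3) := by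
  intro n
  induction n using Nat.twoStepInduction with
  | zero =>
    refine ⟨fun _ => ?_, fun h => absurd h (by decide)⟩
    simpa using A3.add_mem A3.one_mem A3.one_mem
  | one =>
    refine ⟨fun h => absurd h (by decide), fun _ => ?_⟩
    have : (X 2 - X 0) * ((X 0 - X 1 : MvPolynomial (Fin 3) ℚ) ^ 1 + (X 1 - X 2) ^ 1) =
        -((X 2 - X 0) ^ 2) := by ring
    rw [this]
    exact A3.neg_mem hg2
  | more n ih1 ih2 =>
    constructor
    · intro he
      have hn : Even n := by rw [Nat.even_add_one, Nat.even_add_one] at he; simpa using he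
      have hn1 : Odd (n + 1) := Even.add_one hn
      have key : (X 0 - X 1 : MvPolynomial (Fin 3) ℚ) ^ (n + 2) + (X 1 - X 2) ^ (n + 2) =
          -((X 2 - X 0) * ((X 0 - X 1) ^ (n + 1) + (X 1 - X 2) ^ (n + 1)))
          - ((X 0 - X 1) * (X 1 - X 2)) * ((X 0 - X 1) ^ n + (X 1 - X 2) ^ n) := by
        ring
      rw [key]
      exact A3.sub_mem (A3.neg_mem (ih2.2 hn1)) (A3.mul_mem hab (ih1.1 hn))
    · intro ho
      have hn : Odd n := by
        rw [Nat.odd_iff]; rw [Nat.odd_iff] at ho; omega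
      have hn1 : Even (n + 1) := hn.add_one
      have key : (X 2 - X 0 : MvPolynomial (Fin 3) ℚ) *
            ((X 0 - X 1) ^ (n + 2) + (X 1 - X 2) ^ (n + 2)) =
          -((X 2 - X 0) ^ 2 * ((X 0 - X 1) ^ (n + 1) + (X 1 - X 2) ^ (n + 1)))
          - ((X 0 - X 1) * (X 1 - X 2)) *
            ((X 2 - X 0) * ((X 0 - X 1) ^ n + (X 1 - X 2) ^ n)) := by
        ring
      rw [key]
      exact A3.sub_mem (A3.neg_mem (A3.mul_mem hg2 (ih2.1 hn1))) (A3.mul_mem hab (ih1.2 hn))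

private lemma hpg : ∀ k t : ℕ, Even (k + t) →
    ((X 0 - X 1 : MvPolynomial (Fin 3) ℚ) ^ k + (X 1 - X 2) ^ k) * (X 2 - X 0) ^ t ∈ A3 := by
  intro k t hkt
  rcases Nat.even_or_odd t with ht | ht
  · obtain ⟨m, hm⟩ := ht
    have hk : Even k := by
      rw [Nat.even_iff] at hkt ⊢; omega
    have : ((X 0 - X 1 : MvPolynomial (Fin 3) ℚ) ^ k + (X 1 - X 2) ^ k) * (X 2 - X 0) ^ t =
        ((X 0 - X 1) ^ k + (X 1 - X 2) ^ k) * ((X 2 - X 0) ^ 2) ^ m := by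
      subst hm; rw [← pow_mul, two_mul]
    rw [this]
    exact A3.mul_mem ((hp k).1 hk) (A3.pow_mem hg2 m)
  · obtain ⟨m, hm⟩ := ht
    have hk : Odd k := by
      rw [Nat.odd_iff]; rw [Nat.even_iff] at hkt; omega
    have : ((X 0 - X 1 : MvPolynomial (Fin 3) ℚ) ^ k + (X 1 - X 2) ^ k) * (X 2 - X 0) ^ t =
        ((X 2 - X 0) * ((X 0 - X 1) ^ k + (X 1 - X 2) ^ k)) * ((X 2 - X 0) ^ 2) ^ m := by
      rw [show ((X 2 - X 0 : MvPolynomial (Fin 3) ℚ) ^ 2) ^ m = (X 2 - X 0) ^ (2 * m) from (pow_mul _ 2 m).symm, hm]; ring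
    rw [this]
    exact A3.mul_mem ((hp k).2 hk) (A3.pow_mem hg2 m)

private lemma main_le (r s t : ℕ) (hrs : r ≤ s) (h : Even (r + s + t)) :
    ((X 0 - X 1 : MvPolynomial (Fin 3) ℚ) ^ r * (X 1 - X 2) ^ s
      + (X 0 - X 1) ^ s * (X 1 - X 2) ^ r) * (X 2 - X 0) ^ t ∈ A3 := by
  obtain ⟨k, hk⟩ := Nat.exists_eq_add_of_le hrs
  subst hk
  have key : ((X 0 - X 1 : MvPolynomial (Fin 3) ℚ) ^ r * (X 1 - X 2) ^ (r + k)
      + (X 0 - X 1) ^ (r + k) * (X 1 - X 2) ^ r) * (X 2 - X 0) ^ t =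
      ((X 0 - X 1) * (X 1 - X 2)) ^ r *
        (((X 0 - X 1) ^ k + (X 1 - X 2) ^ k) * (X 2 - X 0) ^ t) := by
    rw [pow_add, pow_add, mul_pow]; ring
  rw [key]
  exact A3.mul_mem (A3.pow_mem hab r) (hpg k t (by rw [Nat.even_iff] at h ⊢; omega))

theorem stmt_5 (r s t : ℕ) (h : Even (r + s + t)) :
    ((X 0 - X 1) ^ r * (X 1 - X 2) ^ s + (X 0 - X 1) ^ s * (X 1 - X 2) ^ r) * (X 2 - X 0) ^ t ∈
      Algebra.adjoin ℚ
        {(X 0 + X 1 + X 2 : MvPolynomial (Fin 3) ℚ), X 1, (X 2 - X 0) ^ 2} := by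
  rcases le_total r s with hrs | hrs
  · exact main_le r s t hrs h
  · have := main_le s r t hrs (by rw [Nat.even_iff] at h ⊢; omega)
    rw [show (X 0 - X 1 : MvPolynomial (Fin 3) ℚ) ^ s * (X 1 - X 2) ^ r
        + (X 0 - X 1) ^ r * (X 1 - X 2) ^ s
        = (X 0 - X 1) ^ r * (X 1 - X 2) ^ s + (X 0 - X 1) ^ s * (X 1 - X 2) ^ r from by ring] at this
    exact this
end

section
/- Let g ≥ 2 and m ≥ 2 be integers and set n = 2m. In ℂ[X₁,…,X_n] let I be the ideal generated by the n polynomials (Π_{p≠i}(X_i − X_p))^{2g−1} for 1 ≤ i ≤ n. Then for every integer r with 1 ≤ r ≤ 4(g−1)m(m−1), the coefficient of t^r in Π_{1≤k<l≤n} (1 + (X_k − X_l)² t)^{2(g−1)} ∈ ℂ[X₁,…,X_n][t] is not nilpotent modulo I (its image in ℂ[X₁,…,X_n]/I is not nilpotent). -/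
open MvPolynomial Finset

lemma st7_key (c : ℝ) (hc : 0 ≤ c) (e : ℕ) (Q : Polynomial ℝ) (d : ℕ)
    (hNN : ∀ i, 0 ≤ Q.coeff i) (hPos : ∀ i ≤ d, 0 < Q.coeff i) :
    (∀ i, 0 ≤ ((1 + Polynomial.C c * Polynomial.X) ^ e * Q).coeff i) ∧
      (∀ i ≤ d + (if 0 < c then e else 0), 0 < ((1 + Polynomial.C c * Polynomial.X) ^ e * Q).coeff i) := by
  rcases eq_or_lt_of_le hc with h0 | hpos
  · simp only [← h0, map_zero, zero_mul, add_zero, one_pow, one_mul,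
      if_neg (lt_irrefl (0:ℝ)), add_zero]
    exact ⟨hNN, hPos⟩
  · simp only [if_pos hpos]
    induction e with
    | zero => simpa using ⟨hNN, hPos⟩
    | succ e ih =>
      obtain ⟨ihNN, ihPos⟩ := ih
      have hrw : (1 + Polynomial.C c * Polynomial.X) ^ (e+1) * Q = ((1 + Polynomial.C c * Polynomial.X) ^ e * Q) * (1 + Polynomial.C c * Polynomial.X) := by
        ring
      rw [hrw]
      set R := (1 + Polynomial.C c * Polynomial.X) ^ e * Q with hR
      have hcoeff : ∀ i, (R * (1 + Polynomial.C c * Polynomial.X)).coeff i = R.coeff i + c * (R * Polynomial.X).coeff i := by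
        intro i
        rw [mul_add, mul_one, Polynomial.coeff_add, ← mul_assoc, mul_comm R (Polynomial.C c), mul_assoc, Polynomial.coeff_C_mul]
      constructor
      · intro i
        rw [hcoeff]
        refine add_nonneg (ihNN i) (mul_nonneg hc ?_)
        match i with
        | 0 => rw [Polynomial.coeff_mul_X_zero]
        | (j+1) => rw [Polynomial.coeff_mul_X]; exact ihNN j
      · intro i hi
        rw [hcoeff]
        match i with
        | 0 =>
          rw [Polynomial.coeff_mul_X_zero]
          simpa using ihPos 0 (by omega)
        | (j+1) =>
          rw [Polynomial.coeff_mul_X]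
          exact add_pos_of_nonneg_of_pos (ihNN _) (mul_pos hpos (ihPos j (by omega)))

lemma st7_prod_key {ι : Type*} (c : ι → ℝ) (hc : ∀ i, 0 ≤ c i) (e : ℕ)
    (s : Finset ι) :
    (∀ i, 0 ≤ (∏ a ∈ s, (1 + Polynomial.C (c a) * Polynomial.X) ^ e).coeff i) ∧
      ∀ r ≤ ∑ a ∈ s, (if 0 < c a then e else 0),
        0 < (∏ a ∈ s, (1 + Polynomial.C (c a) * Polynomial.X) ^ e).coeff r := by
  classical
  induction s using Finset.induction with
  | empty =>
    constructor
    · intro i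
      rw [Finset.prod_empty, Polynomial.coeff_one]
      split <;> norm_num
    · intro r hr
      rw [Finset.sum_empty] at hr
      interval_cases r
      simp
  | @insert a s ha ih =>
    obtain ⟨ihNN, ihPos⟩ := ih
    rw [Finset.prod_insert ha, Finset.sum_insert ha]
    have h := st7_key (c a) (hc a) e _ _ ihNN ihPos
    exact ⟨h.1, fun r hr => h.2 r (by omega)⟩

lemma st7_count (W : ℕ) (m : ℕ) :
    (∑ k ∈ Finset.range (2*m), ∑ l ∈ Finset.range (2*m),
      (if k < l then (if l/2 = k/2 then 0 else W) else 0)) = 2*m*(m-1)*W := by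
  induction m with
  | zero => simp
  | succ m ih =>
    have h2 : 2 * (m+1) = (2*m + 1) + 1 := by ring
    rw [h2, Finset.sum_range_succ, Finset.sum_range_succ]
    have hT1 : (∑ l ∈ Finset.range (2*m+1+1),
        (if 2*m+1 < l then (if l/2 = (2*m+1)/2 then 0 else W) else 0)) = 0 := by
      refine Finset.sum_eq_zero fun l hl => ?_
      rw [Finset.mem_range] at hl
      rw [if_neg (by omega)]
    have hT0 : (∑ l ∈ Finset.range (2*m+1+1),
        (if 2*m < l then (if l/2 = (2*m)/2 then 0 else W) else 0)) = 0 := by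
      rw [Finset.sum_range_succ, Finset.sum_range_succ]
      have : (∑ l ∈ Finset.range (2*m),
          (if 2*m < l then (if l/2 = (2*m)/2 then 0 else W) else 0)) = 0 :=
        Finset.sum_eq_zero fun l hl => by
          rw [Finset.mem_range] at hl; rw [if_neg (by omega)]
      rw [this]
      rw [if_neg (by omega), if_pos (by omega), if_pos (by omega)]
    rw [hT1, hT0]
    have hmid : (∑ k ∈ Finset.range (2*m), ∑ l ∈ Finset.range (2*m+1+1),
        (if k < l then (if l/2 = k/2 then 0 else W) else 0))
        = (∑ k ∈ Finset.range (2*m), ((∑ l ∈ Finset.range (2*m),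
          (if k < l then (if l/2 = k/2 then 0 else W) else 0)) + (W + W))) := by
      refine Finset.sum_congr rfl fun k hk => ?_
      rw [Finset.mem_range] at hk
      rw [Finset.sum_range_succ, Finset.sum_range_succ]
      have hA : (if k < 2*m then (if (2*m)/2 = k/2 then 0 else W) else 0) = W := by
        rw [if_pos (by omega), if_neg (by omega)]
      have hB : (if k < 2*m+1 then (if (2*m+1)/2 = k/2 then 0 else W) else 0) = W := by
        rw [if_pos (by omega), if_neg (by omega)]
      rw [hA, hB]
      ring
    rw [hmid, Finset.sum_add_distrib, Finset.sum_const, Finset.card_range, ih]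
    cases m with
    | zero => simp
    | succ m' => simp only [Nat.add_sub_cancel]; ring

theorem stmt_7 (g m : ℕ) (hg : 2 ≤ g) (hm : 2 ≤ m) (n : ℕ) (hn : n = 2 * m)
    (I : Ideal (MvPolynomial (Fin n) ℂ))
    (hI : I = Ideal.span (Set.range fun i : Fin n =>
      (∏ p ∈ univ.erase i, (X i - X p)) ^ (2 * g - 1)))
    (P : Polynomial (MvPolynomial (Fin n) ℂ))
    (hP : P = ∏ k : Fin n, ∏ l ∈ univ.filter (fun l => k < l),
      (1 + Polynomial.C ((X k - X l) ^ 2) * Polynomial.X) ^ (2 * (g - 1)))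
    (r : ℕ) (hr1 : 1 ≤ r) (hr2 : r ≤ 4 * (g - 1) * m * (m - 1)) :
    ¬ IsNilpotent (Ideal.Quotient.mk I (P.coeff r)) := by
  classical
  set v : Fin n → ℂ := fun i => ((i.val / 2 : ℕ) : ℂ) with hv
  set φ : MvPolynomial (Fin n) ℂ →ₐ[ℂ] ℂ := aeval v with hφ
  -- φ kills I
  have hIker : ∀ x ∈ I, φ x = 0 := by
    intro x hx
    rw [hI] at hx
    have hle : Ideal.span (Set.range fun i : Fin n =>
        (∏ p ∈ univ.erase i, (X i - X p)) ^ (2 * g - 1)) ≤ RingHom.ker φ.toRingHom := by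
      rw [Ideal.span_le]
      rintro _ ⟨i, rfl⟩
      have hin : i.val < n := i.isLt
      have hj : (if i.val % 2 = 0 then i.val + 1 else i.val - 1) < n := by split <;> omega
      set p₀ : Fin n := ⟨_, hj⟩ with hp₀def
      have hv0 : p₀.val ≠ i.val ∧ p₀.val / 2 = i.val / 2 := by
        simp only [hp₀def]
        split <;> omega
      have hp₀ : p₀ ≠ i := Fin.ne_of_val_ne hv0.1
      have hz : φ (X i - X p₀) = 0 := by
        rw [map_sub, hφ, aeval_X, aeval_X, sub_eq_zero, hv]
        exact congrArg _ hv0.2.symm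
      show φ.toRingHom _ = 0
      show φ _ = 0
      rw [map_pow, map_prod]
      rw [Finset.prod_eq_zero (Finset.mem_erase.2 ⟨hp₀, Finset.mem_univ _⟩) hz]
      exact zero_pow (by omega)
    exact hle hx
  -- real polynomial
  set u : Fin n → ℝ := fun i => ((i.val / 2 : ℕ) : ℝ) with hu
  set c : (Σ _ : Fin n, Fin n) → ℝ := fun x => (u x.1 - u x.2) ^ 2 with hc
  set σF : Finset (Σ _ : Fin n, Fin n) :=
    univ.sigma (fun k => univ.filter (fun l => k < l)) with hσ
  set E : ℕ := 2 * (g - 1) with hE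
  set Qr : Polynomial ℝ := ∏ x ∈ σF, (1 + Polynomial.C (c x) * Polynomial.X) ^ E with hQr
  have hmap : P.map φ.toRingHom = Qr.map (algebraMap ℝ ℂ) := by
    rw [hP, hQr, hσ, Finset.prod_sigma]
    rw [Polynomial.map_prod, Polynomial.map_prod]
    refine Finset.prod_congr rfl fun k _ => ?_
    rw [Polynomial.map_prod, Polynomial.map_prod]
    refine Finset.prod_congr rfl fun l _ => ?_
    simp only [Polynomial.map_pow, Polynomial.map_add, Polynomial.map_one,
      Polynomial.map_mul, Polynomial.map_C, Polynomial.map_X]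
    have hval : φ.toRingHom ((X k - X l) ^ 2) = algebraMap ℝ ℂ (c ⟨k, l⟩) := by
      show φ ((X k - X l) ^ 2) = algebraMap ℝ ℂ ((u k - u l) ^ 2)
      rw [map_pow, map_sub, hφ, aeval_X, aeval_X, map_pow, map_sub, hu, hv]
      push_cast
      ring
    rw [hval]
  have hiff : ∀ k l : Fin n, (0 < c ⟨k, l⟩ ↔ ¬ (l.val / 2 = k.val / 2)) := by
    intro k l
    rw [hc]
    rw [sq_pos_iff, sub_ne_zero]
    show ((k.val / 2 : ℕ) : ℝ) ≠ ((l.val / 2 : ℕ) : ℝ) ↔ _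
    rw [ne_eq, Nat.cast_inj]
    exact ⟨fun h h2 => h h2.symm, fun h h2 => h h2.symm⟩
  have hsum : (∑ x ∈ σF, if 0 < c x then E else 0)
      = ∑ k ∈ Finset.range n, ∑ l ∈ Finset.range n,
          (if k < l then (if l / 2 = k / 2 then 0 else E) else 0) := by
    rw [hσ, Finset.sum_sigma]
    rw [← Fin.sum_univ_eq_sum_range (fun kv => ∑ l ∈ Finset.range n,
      (if kv < l then (if l / 2 = kv / 2 then 0 else E) else 0)) n]
    refine Finset.sum_congr rfl fun k _ => ?_
    rw [← Fin.sum_univ_eq_sum_range (fun lv =>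
      (if k.val < lv then (if lv / 2 = k.val / 2 then 0 else E) else 0)) n]
    rw [Finset.sum_filter]
    refine Finset.sum_congr rfl fun l _ => ?_
    refine if_congr Fin.lt_def ?_ rfl
    calc (if 0 < c ⟨k, l⟩ then E else 0)
        = if ¬((l.val : ℕ) / 2 = (k.val : ℕ) / 2) then E else 0 :=
          if_congr (hiff k l) rfl rfl
      _ = _ := ite_not _ _ _
  have hsum2 : (∑ x ∈ σF, if 0 < c x then E else 0) = 2 * m * (m - 1) * E := by
    rw [hsum, hn]
    exact st7_count E m
  have hrle : r ≤ ∑ x ∈ σF, if 0 < c x then E else 0 := by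
    rw [hsum2]
    calc r ≤ 4 * (g - 1) * m * (m - 1) := hr2
      _ = 2 * m * (m - 1) * E := by rw [hE]; ring
  have hpk := st7_prod_key c (fun x => sq_nonneg _) E σF
  have hQpos : 0 < Qr.coeff r := hpk.2 r hrle
  have hne : φ (P.coeff r) ≠ 0 := by
    have h1 : φ (P.coeff r) = algebraMap ℝ ℂ (Qr.coeff r) := by
      have h2 := congrArg (fun q => Polynomial.coeff q r) hmap
      simp only [Polynomial.coeff_map] at h2
      exact h2
    rw [h1]
    intro h
    have := (algebraMap ℝ ℂ).injective (h.trans (map_zero (algebraMap ℝ ℂ)).symm)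
    exact absurd this (ne_of_gt hQpos)
  rintro ⟨s, hs⟩
  rw [← map_pow, Ideal.Quotient.eq_zero_iff_mem] at hs
  have h0 : φ (P.coeff r) ^ s = 0 := by rw [← map_pow]; exact hIker _ hs
  exact hne (pow_eq_zero_iff'.mp h0).1
end

section
/- Let g ≥ 2 and m ≥ 2 be integers and set n = 2m+1. In ℂ[X₁,…,X_n] let I be the ideal generated by the n polynomials (Π_{p≠i}(X_i − X_p))^{2g−1} for 1 ≤ i ≤ n. Then for every integer r with 1 ≤ r ≤ 4(g−1)(m²−1), the coefficient of t^r in Π_{1≤k<l≤n} (1 + (X_k − X_l)² t)^{2(g−1)} ∈ ℂ[X₁,…,X_n][t] is not nilpotent modulo I (its image in ℂ[X₁,…,X_n]/I is not nilpotent). -/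
open MvPolynomial Finset

private def bfn (k : ℕ) : ℕ := if k = 0 then 1 else (k+1)/2
private def tfn (k : ℕ) : ℕ := if k = 0 then 3 else 2*((k+1)/2)+1

private lemma bfn_lt {k l : ℕ} (h : tfn k ≤ l) : k < l ∧ bfn k < bfn l := by
  unfold bfn tfn at *
  split_ifs at * <;> first | exact absurd ‹False› not_false | omega

private lemma bfn_partner (m i : ℕ) (hm : 2 ≤ m) (h : i < 2*m+1) :
    ∃ p, p < 2*m+1 ∧ p ≠ i ∧ bfn p = bfn i := by
  rcases Nat.eq_zero_or_pos i with h0 | h0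
  · exact ⟨1, by omega, by omega, by subst h0; simp [bfn]⟩
  rcases Nat.even_or_odd i with ⟨j, hj⟩ | ⟨j, hj⟩
  · refine ⟨i - 1, by omega, by omega, ?_⟩
    unfold bfn; split_ifs <;> first | exact absurd ‹False› not_false | omega
  · refine ⟨i + 1, by omega, by omega, ?_⟩
    unfold bfn; split_ifs <;> first | exact absurd ‹False› not_false | omega

private lemma tfn_le (m k : ℕ) (hm : 2 ≤ m) (h : k < 2*m+1) : tfn k ≤ 2*m+1 := by
  unfold tfn; split_ifs <;> omega

private lemma sumTau (m : ℕ) : ∑ k ∈ range (2*m+1), tfn k = 2*(m*m)+4*m+3 := by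
  induction m with
  | zero => simp [tfn]
  | succ m ih =>
      have h : 2*(m+1)+1 = (2*m+1)+1+1 := by omega
      have h2 : (m+1)*(m+1) = m*m+2*m+1 := by ring
      rw [h, Finset.sum_range_succ, Finset.sum_range_succ, ih]
      unfold tfn
      split_ifs <;> first | exact absurd ‹False› not_false | omega

private lemma sumC (m : ℕ) (hm : 2 ≤ m) :
    ∑ k ∈ range (2*m+1), ((2*m+1) - tfn k) = 2*(m*m) - 2 := by
  have h1 : ∑ k ∈ range (2*m+1), (((2*m+1) - tfn k) + tfn k)
      = ∑ k ∈ range (2*m+1), (2*m+1) :=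
    Finset.sum_congr rfl fun k hk => by
      have := tfn_le m k hm (Finset.mem_range.mp hk); omega
  rw [Finset.sum_add_distrib, sumTau, Finset.sum_const, Finset.card_range,
    smul_eq_mul] at h1
  have h2 : (2*m+1)*(2*m+1) = 4*(m*m)+4*m+1 := by ring
  omega

private def PosUpTo (p : Polynomial ℝ) (d : ℕ) : Prop :=
  (∀ j, 0 ≤ p.coeff j) ∧ ∀ j ≤ d, 0 < p.coeff j

private lemma posUpTo_one : PosUpTo 1 0 := by
  constructor
  · intro j; rw [Polynomial.coeff_one]; split_ifs <;> norm_num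
  · intro j hj; interval_cases j; simp

private lemma posUpTo_mul {p q : Polynomial ℝ} {d e : ℕ}
    (hp : PosUpTo p d) (hq : PosUpTo q e) : PosUpTo (p*q) (d+e) := by
  obtain ⟨hp0, hp1⟩ := hp; obtain ⟨hq0, hq1⟩ := hq
  constructor
  · intro j
    rw [Polynomial.coeff_mul]
    exact Finset.sum_nonneg fun x _ => mul_nonneg (hp0 _) (hq0 _)
  · intro j hj
    rw [Polynomial.coeff_mul]
    apply Finset.sum_pos' (fun x _ => mul_nonneg (hp0 _) (hq0 _))
    refine ⟨(min j d, j - min j d), ?_, ?_⟩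
    · rw [Finset.HasAntidiagonal.mem_antidiagonal]; omega
    · exact mul_pos (hp1 _ (by omega)) (hq1 _ (by omega))

private lemma posUpTo_pow {p : Polynomial ℝ} {d : ℕ} (hp : PosUpTo p d) (e : ℕ) :
    PosUpTo (p^e) (e*d) := by
  induction e with
  | zero => simpa using posUpTo_one
  | succ e ih =>
      have h := posUpTo_mul ih hp
      rw [pow_succ]
      convert h using 1
      ring

private lemma posUpTo_prod {ι : Type*} (s : Finset ι) (f : ι → Polynomial ℝ) (d : ι → ℕ)
    (h : ∀ i ∈ s, PosUpTo (f i) (d i)) :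
    PosUpTo (∏ i ∈ s, f i) (∑ i ∈ s, d i) := by
  induction s using Finset.cons_induction with
  | empty => simpa using posUpTo_one
  | cons a s ha ih =>
      rw [Finset.prod_cons, Finset.sum_cons]
      exact posUpTo_mul (h a (Finset.mem_cons_self a s))
        (ih fun i hi => h i (Finset.mem_cons_of_mem hi))

private lemma coeff_linear (c : ℝ) (j : ℕ) :
    (1 + Polynomial.C c * Polynomial.X).coeff j
      = if j = 0 then 1 else if j = 1 then c else 0 := by
  rw [Polynomial.coeff_add, Polynomial.coeff_one, Polynomial.coeff_C_mul,
    Polynomial.coeff_X]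
  split_ifs <;> first | ring1 | (exfalso; omega) | skip

private lemma posUpTo_linear_nonneg {c : ℝ} (hc : 0 ≤ c) :
    PosUpTo (1 + Polynomial.C c * Polynomial.X) 0 := by
  constructor
  · intro j; rw [coeff_linear]; split_ifs <;> norm_num [hc]
  · intro j hj; interval_cases j; rw [coeff_linear]; norm_num

private lemma posUpTo_linear_pos {c : ℝ} (hc : 0 < c) :
    PosUpTo (1 + Polynomial.C c * Polynomial.X) 1 := by
  constructor
  · intro j; rw [coeff_linear]; split_ifs <;> norm_num [hc.le]
  · intro j hj; interval_cases j <;> rw [coeff_linear] <;> norm_num [hc]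

theorem stmt_8 (g m : ℕ) (hg : 2 ≤ g) (hm : 2 ≤ m) (n : ℕ) (hn : n = 2 * m + 1)
    (I : Ideal (MvPolynomial (Fin n) ℂ))
    (hI : I = Ideal.span (Set.range fun i : Fin n =>
      (∏ p ∈ univ.erase i, (X i - X p)) ^ (2 * g - 1)))
    (P : Polynomial (MvPolynomial (Fin n) ℂ))
    (hP : P = ∏ k : Fin n, ∏ l ∈ univ.filter (fun l => k < l),
      (1 + Polynomial.C ((X k - X l) ^ 2) * Polynomial.X) ^ (2 * (g - 1)))
    (r : ℕ) (hr1 : 1 ≤ r) (hr2 : r ≤ 4 * (g - 1) * (m ^ 2 - 1)) :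
    ¬ IsNilpotent (Ideal.Quotient.mk I (P.coeff r)) := by
  have hn0 : 0 < n := by omega
  -- the evaluation point
  set a : Fin n → ℂ := fun i => ((bfn (i : ℕ) : ℕ) : ℂ) with ha
  -- the ideal is killed by evaluation
  have hkerle : I ≤ RingHom.ker (MvPolynomial.eval (R := ℂ) a) := by
    rw [hI, Ideal.span_le]
    rintro _ ⟨i, rfl⟩
    rw [SetLike.mem_coe, RingHom.mem_ker]
    obtain ⟨p, hp1, hp2, hp3⟩ := bfn_partner m (i : ℕ) hm (by omega)
    rw [map_pow]
    have hz : MvPolynomial.eval a (∏ p ∈ univ.erase i, (X i - X p)) = 0 := by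
      rw [map_prod]
      refine Finset.prod_eq_zero (i := (⟨p, by omega⟩ : Fin n)) ?_ ?_
      · exact Finset.mem_erase.mpr ⟨Fin.ne_of_val_ne hp2, Finset.mem_univ _⟩
      · rw [map_sub, eval_X, eval_X, ha]
        simp only
        rw [hp3, sub_self]
    rw [hz, zero_pow (by omega)]
  have hker : ∀ x ∈ I, MvPolynomial.eval a x = 0 := fun x hx => hkerle hx
  intro hnil
  -- pass to ℂ via the quotient lift
  set ψ := Ideal.Quotient.lift I (MvPolynomial.eval a) hker with hψ
  have h2 : IsNilpotent (ψ (Ideal.Quotient.mk I (P.coeff r))) := hnil.map ψ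
  rw [hψ, Ideal.Quotient.lift_mk] at h2
  have h3 : MvPolynomial.eval a (P.coeff r) = 0 := h2.eq_zero
  -- the real polynomial
  set Q : Polynomial ℝ := ∏ k : Fin n, ∏ l ∈ univ.filter (fun l => k < l),
      (1 + Polynomial.C (((bfn (k:ℕ) : ℝ) - (bfn (l:ℕ) : ℝ))^2) * Polynomial.X) ^ (2 * (g - 1))
    with hQ
  have hmap : Q.map (algebraMap ℝ ℂ) = P.map (MvPolynomial.eval a) := by
    rw [hQ, hP, Polynomial.map_prod, Polynomial.map_prod]
    refine Finset.prod_congr rfl fun k _ => ?_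
    rw [Polynomial.map_prod, Polynomial.map_prod]
    refine Finset.prod_congr rfl fun l _ => ?_
    rw [Polynomial.map_pow, Polynomial.map_pow]
    congr 1
    rw [Polynomial.map_add, Polynomial.map_add, Polynomial.map_one, Polynomial.map_one,
      Polynomial.map_mul, Polynomial.map_mul, Polynomial.map_C, Polynomial.map_C,
      Polynomial.map_X, Polynomial.map_X]
    congr 1
    congr 1
    simp only [map_pow, map_sub, eval_X, ha, Complex.coe_algebraMap]
    push_cast
    ring
  -- positivity of the real coefficient
  set dd : Fin n → Fin n → ℕ :=
    fun k l => if bfn (k:ℕ) = bfn (l:ℕ) then 0 else 2 * (g - 1) with hdd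
  have hQpos : PosUpTo Q (∑ k : Fin n, ∑ l ∈ univ.filter (fun l => k < l), dd k l) := by
    rw [hQ]
    refine posUpTo_prod _ _ _ fun k _ => ?_
    refine posUpTo_prod _ _ _ fun l _ => ?_
    simp only [hdd]
    by_cases hb : bfn (k:ℕ) = bfn (l:ℕ)
    · rw [if_pos hb]
      have h0 : ((bfn (k:ℕ) : ℝ) - (bfn (l:ℕ) : ℝ))^2 = 0 := by rw [hb]; ring
      have h := posUpTo_pow (posUpTo_linear_nonneg (le_of_eq h0.symm)) (2*(g-1))
      rw [Nat.mul_zero] at h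
      exact h
    · rw [if_neg hb]
      have hne : ((bfn (k:ℕ) : ℝ) - (bfn (l:ℕ) : ℝ)) ≠ 0 := by
        refine sub_ne_zero.mpr ?_
        exact_mod_cast hb
      have h := posUpTo_pow (posUpTo_linear_pos (pow_two_pos_of_ne_zero hne)) (2*(g-1))
      rw [Nat.mul_one] at h
      exact h
  -- the degree bound
  have hcount : r ≤ ∑ k : Fin n, ∑ l ∈ univ.filter (fun l => k < l), dd k l := by
    have hinner : ∀ k : Fin n,
        2*(g-1) * (n - tfn (k:ℕ)) ≤ ∑ l ∈ univ.filter (fun l => k < l), dd k l := by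
      intro k
      set S : Finset (Fin n) := univ.filter (fun l : Fin n => tfn (k:ℕ) ≤ (l:ℕ)) with hS
      have hsub : S ⊆ univ.filter (fun l => k < l) := by
        intro l hl
        rw [hS, Finset.mem_filter] at hl
        exact Finset.mem_filter.mpr ⟨Finset.mem_univ _, Fin.lt_def.mpr (bfn_lt hl.2).1⟩
      have hval : ∀ l ∈ S, dd k l = 2*(g-1) := by
        intro l hl
        rw [hS, Finset.mem_filter] at hl
        simp only [hdd]
        rw [if_neg (Nat.ne_of_lt (bfn_lt hl.2).2)]
      have hcard : n - tfn (k:ℕ) ≤ S.card := by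
        have := Finset.card_le_card_of_injOn
          (f := fun j : ℕ => (⟨(n-1-j) % n, Nat.mod_lt _ hn0⟩ : Fin n))
          (s := Finset.range (n - tfn (k:ℕ))) (t := S) ?_ ?_
        · simpa using this
        · intro j hj
          rw [Finset.mem_coe, Finset.mem_range] at hj
          rw [Finset.mem_coe, hS, Finset.mem_filter]
          refine ⟨Finset.mem_univ _, ?_⟩
          simp only
          rw [Nat.mod_eq_of_lt (by omega)]
          omega
        · intro j1 h1 j2 h2 hf
          simp only [Finset.coe_range, Set.mem_Iio] at h1 h2
          have := congrArg Fin.val hf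
          simp only at this
          rw [Nat.mod_eq_of_lt (by omega), Nat.mod_eq_of_lt (by omega)] at this
          omega
      calc 2*(g-1) * (n - tfn (k:ℕ)) ≤ 2*(g-1) * S.card := by
            exact Nat.mul_le_mul_left _ hcard
        _ = ∑ l ∈ S, dd k l := by
            rw [Finset.sum_congr rfl hval, Finset.sum_const, smul_eq_mul, Nat.mul_comm]
        _ ≤ ∑ l ∈ univ.filter (fun l => k < l), dd k l :=
            Finset.sum_le_sum_of_subset hsub
    have hsum : ∑ k : Fin n, 2*(g-1) * (n - tfn (k:ℕ)) = 2*(g-1) * (2*(m*m) - 2) := by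
      rw [← Finset.mul_sum]
      congr 1
      rw [Fin.sum_univ_eq_sum_range (fun k => n - tfn k) n, hn]
      exact sumC m hm
    have hr2' : r ≤ 2*(g-1) * (2*(m*m) - 2) := by
      refine le_trans hr2 (le_of_eq ?_)
      have hA : 4 ≤ m*m := by nlinarith
      calc 4*(g-1)*(m^2-1) = (g-1) * (4*(m*m-1)) := by rw [sq]; ring
        _ = (g-1) * (2*(2*(m*m)-2)) := by rw [show 4*(m*m-1) = 2*(2*(m*m)-2) by omega]
        _ = 2*(g-1) * (2*(m*m)-2) := by ring
    calc r ≤ 2*(g-1) * (2*(m*m) - 2) := hr2'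
      _ = ∑ k : Fin n, 2*(g-1) * (n - tfn (k:ℕ)) := hsum.symm
      _ ≤ _ := Finset.sum_le_sum fun k _ => hinner k
  have hQr : 0 < Q.coeff r := hQpos.2 r hcount
  -- conclude
  have : MvPolynomial.eval a (P.coeff r) = ((Q.coeff r : ℝ) : ℂ) := by
    rw [← Polynomial.coeff_map (MvPolynomial.eval a) r, ← hmap, Polynomial.coeff_map]
    simp [Complex.coe_algebraMap]
  rw [this] at h3
  exact absurd (Complex.ofReal_eq_zero.mp h3) (ne_of_gt hQr)
end

section
/- Let R be a commutative ℚ-algebra and let γ₁,…,γ_K, δ₁,…,δ_M, ε₁,…,ε_N, α₁,…,α_M, β₁,…,β_N be elements of R such that for every integer m ≥ 1: Σ_{i=1}^K γ_i^m = Σ_{i=1}^M α_i δ_i^m + m Σ_{i=1}^N β_i ε_i^{m−1}. Then in the formal power series ring R[[t]]: Π_{i=1}^K (1 + γ_i t) = exp( Σ_{i=1}^M α_i log(1 + δ_i t) + Σ_{i=1}^N β_i t (1 + ε_i t)^{−1} ), where log(1 + x t) := Σ_{r≥1} (−1)^{r+1} x^r t^r / r, (1 + ε t)^{−1} := Σ_{r≥0}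 (−1)^r ε^r t^r, and exp(f) := Σ_{k≥0} f^k / k! for f ∈ R[[t]] with zero constant term. -/
/-- `plog x` is the formal power series `log(1 + x t) = ∑_{r ≥ 1} (-1)^{r+1} x^r t^r / r`. -/
noncomputable def plog {R : Type*} [CommRing R] [Algebra ℚ R] (x : R) : PowerSeries R :=
  PowerSeries.mk fun r => ((-1 : ℚ) ^ (r + 1) / (r : ℚ)) • x ^ r

/-- `pgeom x` is the formal power series `(1 + x t)⁻¹ = ∑_{r ≥ 0} (-1)^r x^r t^r`. -/
noncomputable def pgeom {R : Type*} [CommRing R] (x : R) : PowerSeries R :=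
  PowerSeries.mk fun r => (-1 : R) ^ r * x ^ r

/-- `pexp f` is the exponential `∑_{k ≥ 0} f^k / k!` of a power series `f`; when `f`
has zero constant term only the terms with `k ≤ n` contribute to the `n`-th
coefficient, so the sum below agrees with the full exponential sum. -/
noncomputable def pexp {R : Type*} [CommRing R] [Algebra ℚ R] (f : PowerSeries R) :
    PowerSeries R :=
  PowerSeries.mk fun n =>
    ∑ k ∈ Finset.range (n + 1), ((k.factorial : ℚ)⁻¹) • (PowerSeries.coeff (R := R) n (f ^ k))

open PowerSeries Finset

section Aux

set_option linter.unusedSectionVars false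

variable {R : Type*} [CommRing R]

lemma coeff_pow_eq_zero {f : R⟦X⟧} (hf : constantCoeff f = 0) {m k : ℕ} (h : m < k) :
    coeff m (f ^ k) = 0 := by
  have : (X : R⟦X⟧) ^ k ∣ f ^ k := pow_dvd_pow_of_dvd (X_dvd_iff.2 hf) k
  exact (X_pow_dvd_iff.1 this) m h

lemma coeff_mul_congr {a b c : R⟦X⟧} {n : ℕ} (h : ∀ j ≤ n, coeff j a = coeff j b) :
    coeff n (c * a) = coeff n (c * b) := by
  rw [coeff_mul, coeff_mul]
  refine Finset.sum_congr rfl fun p hp => ?_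
  rw [h p.2 (by have := Finset.HasAntidiagonal.antidiagonal.snd_le hp; omega)]

lemma one_add_mul_pgeom (x : R) : (1 + C x * X) * pgeom x = 1 := by
  ext n
  rcases n with _ | n
  · simp [pgeom]
  · rw [add_mul, one_mul, map_add, mul_assoc, coeff_C_mul, coeff_succ_X_mul]
    simp [pgeom, pow_succ]
    ring

variable [Algebra ℚ R]

/-- truncated exponential -/
noncomputable def pexpT (f : R⟦X⟧) (n : ℕ) : R⟦X⟧ :=
  ∑ k ∈ Finset.range (n + 1), ((k.factorial : ℚ)⁻¹) • f ^ k

lemma coeff_pexpT (f : R⟦X⟧) (n m : ℕ) :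
    coeff m (pexpT f n)
      = ∑ k ∈ Finset.range (n + 1), ((k.factorial : ℚ)⁻¹) • coeff m (f ^ k) := by
  simp [pexpT, map_sum]

lemma coeff_pexp_eq {f : R⟦X⟧} (hf : constantCoeff f = 0) {m n : ℕ} (hmn : m ≤ n) :
    coeff m (pexp f) = coeff m (pexpT f n) := by
  rw [coeff_pexpT, pexp, coeff_mk]
  refine Finset.sum_subset (Finset.range_subset_range.2 (by omega)) fun k hk hk2 => ?_
  rw [coeff_pow_eq_zero hf (by simp at hk2 ⊢; omega), smul_zero]

lemma constantCoeff_pexp (f : R⟦X⟧) : constantCoeff (pexp f) = 1 := by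
  have : constantCoeff (pexp f) = coeff 0 (pexp f) := by
    simp [coeff_zero_eq_constantCoeff]
  rw [this, pexp, coeff_mk]
  simp

lemma derivative_pexp {f : R⟦X⟧} (hf : constantCoeff f = 0) :
    d⁄dX R (pexp f) = d⁄dX R f * pexp f := by
  ext n
  rw [coeff_derivative, coeff_pexp_eq hf (le_refl (n+1)), coeff_pexpT,
    Finset.sum_mul, Finset.sum_range_succ']
  have h0 : ((Nat.factorial 0 : ℚ)⁻¹ • coeff (n+1) (f ^ 0)) * ((n : R) + 1) = 0 := by
    simp
  rw [h0, add_zero]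
  have hL : ∀ j ∈ Finset.range (n + 1),
      ((Nat.factorial (j+1) : ℚ)⁻¹ • coeff (n+1) (f ^ (j+1))) * ((n : R) + 1)
        = (Nat.factorial j : ℚ)⁻¹ • coeff n (d⁄dX R f * f ^ j) := by
    intro j _
    rw [smul_mul_assoc, ← coeff_derivative, Derivation.leibniz_pow, Nat.add_sub_cancel,
      smul_eq_mul, map_nsmul, ← Nat.cast_smul_eq_nsmul ℚ, smul_smul]
    congr 1
    · rw [Nat.factorial_succ]
      push_cast
      field_simp
    · rw [mul_comm]
  rw [Finset.sum_congr rfl hL]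
  have hR : coeff n (d⁄dX R f * pexp f) = coeff n (d⁄dX R f * pexpT f n) :=
    coeff_mul_congr fun j hj => coeff_pexp_eq hf hj
  rw [hR, pexpT, Finset.mul_sum, map_sum]
  refine Finset.sum_congr rfl fun k _ => ?_
  rw [mul_smul_comm, coeff_smul]

lemma ode_unique {a y z : R⟦X⟧} (h0 : constantCoeff y = constantCoeff z)
    (hy : d⁄dX R y = a * y) (hz : d⁄dX R z = a * z) : y = z := by
  ext n
  induction n using Nat.strong_induction_on with
  | _ n ih =>
    match n with
    | 0 => simpa [coeff_zero_eq_constantCoeff] using h0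
    | Nat.succ n =>
      have hdy := coeff_derivative y n
      have hdz := coeff_derivative z n
      rw [hy] at hdy
      rw [hz] at hdz
      have hmul : coeff n (a * y) = coeff n (a * z) := by
        rw [coeff_mul, coeff_mul]
        refine Finset.sum_congr rfl fun p hp => ?_
        rw [ih p.2 (by have := Finset.HasAntidiagonal.antidiagonal.snd_le hp; omega)]
      have key : coeff (n+1) y * ((n:R)+1) = coeff (n+1) z * ((n:R)+1) := by
        rw [← hdy, ← hdz, hmul]
      have hn : ((n:R)+1) = ((n+1 : ℚ)) • (1 : R) := by
        push_cast [Algebra.smul_def]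
        simp
      rw [hn, mul_smul_comm, mul_smul_comm, mul_one, mul_one] at key
      have := congrArg (fun x => (((n:ℚ)+1)⁻¹) • x) key
      simpa [smul_smul, inv_mul_cancel₀ (show ((n:ℚ)+1) ≠ 0 by positivity)] using this

lemma prod_deriv {ι : Type*} (s : Finset ι) (γ : ι → R) :
    d⁄dX R (∏ i ∈ s, (1 + C (γ i) * X)) * ∏ i ∈ s, pgeom (γ i)
      = ∑ i ∈ s, C (γ i) * pgeom (γ i) := by
  classical
  induction s using Finset.induction_on with
  | empty => simp
  | insert a s hx ih =>
    rw [Finset.prod_insert hx, Finset.prod_insert hx, Finset.sum_insert hx, Derivation.leibniz,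
      smul_eq_mul, smul_eq_mul]
    have hD : d⁄dX R (1 + C (γ a) * X) = C (γ a) := by
      rw [map_add, Derivation.leibniz, smul_eq_mul, smul_eq_mul]
      simp
    have hu : (1 + C (γ a) * X) * pgeom (γ a) = 1 := one_add_mul_pgeom (γ a)
    have hprod : (∏ i ∈ s, (1 + C (γ i) * X)) * ∏ i ∈ s, pgeom (γ i) = 1 := by
      rw [← Finset.prod_mul_distrib]
      exact Finset.prod_eq_one fun i _ => one_add_mul_pgeom (γ i)
    calc ((1 + C (γ a) * X) * d⁄dX R (∏ i ∈ s, (1 + C (γ i) * X)) +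
            (∏ i ∈ s, (1 + C (γ i) * X)) * d⁄dX R (1 + C (γ a) * X)) *
          (pgeom (γ a) * ∏ i ∈ s, pgeom (γ i))
        = (d⁄dX R (∏ i ∈ s, (1 + C (γ i) * X)) * ∏ i ∈ s, pgeom (γ i)) *
            ((1 + C (γ a) * X) * pgeom (γ a)) +
          (d⁄dX R (1 + C (γ a) * X) * pgeom (γ a)) *
            ((∏ i ∈ s, (1 + C (γ i) * X)) * ∏ i ∈ s, pgeom (γ i)) := by ring
      _ = C (γ a) * pgeom (γ a) + ∑ i ∈ s, C (γ i) * pgeom (γ i) := by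
          rw [hu, hprod, mul_one, mul_one, ih, hD, add_comm]

lemma key_identity {K M N : ℕ} (γ : Fin K → R) (δ : Fin M → R) (ε : Fin N → R)
    (α : Fin M → R) (β : Fin N → R)
    (h : ∀ m : ℕ, 1 ≤ m →
      ∑ i, γ i ^ m = ∑ i, α i * δ i ^ m + (m : R) * ∑ i, β i * ε i ^ (m - 1)) :
    ∑ i, C (γ i) * pgeom (γ i) =
      d⁄dX R (∑ i, C (α i) * plog (δ i) +
        ∑ i, C (β i) * X * pgeom (ε i)) := by
  ext n
  rw [coeff_derivative, map_sum, map_add, map_sum, map_sum]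
  have hsmul : ∀ x : R, (((-1:ℚ)^(n+1+1)/((n:ℚ)+1)) • x) * ((n:R)+1) = (-1:R)^n * x := by
    intro x
    have h1 : ((n:R)+1) = algebraMap ℚ R ((n:ℚ)+1) := by push_cast; simp
    rw [Algebra.smul_def, h1, mul_assoc, mul_comm x, ← mul_assoc, ← map_mul,
      div_mul_cancel₀ _ (show ((n:ℚ)+1) ≠ 0 by positivity)]
    rw [show ((-1:ℚ)^(n+1+1)) = (-1:ℚ)^n by rw [pow_succ, pow_succ]; ring]
    rw [map_pow, map_neg, map_one, mul_comm]
  have hγ : ∀ i : Fin K, coeff n (C (γ i) * pgeom (γ i))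
      = (-1:R)^n * (γ i ^ (n+1)) := by
    intro i
    rw [coeff_C_mul, pgeom, coeff_mk, pow_succ]
    ring
  have hα : ∀ i : Fin M, coeff (n+1) (C (α i) * plog (δ i))
      = ((-1:ℚ)^(n+1+1)/((n:ℚ)+1)) • (α i * δ i ^ (n+1)) := by
    intro i
    rw [coeff_C_mul, plog, coeff_mk, mul_smul_comm]
    norm_num
  have hβ : ∀ i : Fin N, coeff (n+1) (C (β i) * X * pgeom (ε i))
      = (-1:R)^n * (β i * ε i ^ n) := by
    intro i
    rw [mul_assoc, coeff_C_mul, coeff_succ_X_mul, pgeom, coeff_mk]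
    ring
  rw [Finset.sum_congr rfl fun i _ => hγ i, Finset.sum_congr rfl fun i _ => hα i,
    Finset.sum_congr rfl fun i _ => hβ i, add_mul, Finset.sum_mul, Finset.sum_mul,
    Finset.sum_congr rfl fun (i : Fin M) _ => hsmul (α i * δ i ^ (n+1))]
  have hh := h (n+1) (by omega)
  rw [Finset.sum_congr rfl fun (i : Fin N) _ => (by ring :
      ((-1:R)^n * (β i * ε i ^ n)) * ((n:R)+1)
        = ((-1:R)^n * ((n:R)+1)) * (β i * ε i ^ n))]
  rw [← Finset.mul_sum, ← Finset.mul_sum, ← Finset.mul_sum]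
  simp only [Nat.add_sub_cancel] at hh
  push_cast at hh
  rw [hh]
  ring

end Aux

theorem stmt_11 {R : Type*} [CommRing R] [Algebra ℚ R] (K M N : ℕ)
    (γ : Fin K → R) (δ : Fin M → R) (ε : Fin N → R) (α : Fin M → R) (β : Fin N → R)
    (h : ∀ m : ℕ, 1 ≤ m →
      ∑ i, γ i ^ m = ∑ i, α i * δ i ^ m + (m : R) * ∑ i, β i * ε i ^ (m - 1)) :
    ∏ i, (1 + PowerSeries.C (R := R) (γ i) * PowerSeries.X) =
      pexp (∑ i, PowerSeries.C (R := R) (α i) * plog (δ i) +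
            ∑ i, PowerSeries.C (R := R) (β i) * PowerSeries.X * pgeom (ε i)) := by
  set g : R⟦X⟧ := ∑ i, C (α i) * plog (δ i) + ∑ i, C (β i) * X * pgeom (ε i) with hg
  have hg0 : constantCoeff g = 0 := by
    rw [hg]
    simp only [map_add, map_sum, map_mul, constantCoeff_C, constantCoeff_X]
    have h1 : ∀ x : R, constantCoeff (plog x) = 0 := by
      intro x
      rw [← coeff_zero_eq_constantCoeff, plog, coeff_mk]
      simp
    simp [h1]
  have hprod : (∏ i, (1 + C (γ i) * X)) * ∏ i, pgeom (γ i) = 1 := by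
    rw [← Finset.prod_mul_distrib]
    exact Finset.prod_eq_one fun i _ => one_add_mul_pgeom (γ i)
  have hkey : d⁄dX R (∏ i, (1 + C (γ i) * X)) * ∏ i, pgeom (γ i) = d⁄dX R g :=
    (prod_deriv Finset.univ γ).trans (key_identity γ δ ε α β h)
  have hy : d⁄dX R (∏ i, (1 + C (γ i) * X))
      = d⁄dX R g * ∏ i, (1 + C (γ i) * X) := by
    calc d⁄dX R (∏ i, (1 + C (γ i) * X))
        = d⁄dX R (∏ i, (1 + C (γ i) * X)) *
            ((∏ i, (1 + C (γ i) * X)) * ∏ i, pgeom (γ i)) := by rw [hprod, mul_one]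
      _ = (d⁄dX R (∏ i, (1 + C (γ i) * X)) * ∏ i, pgeom (γ i)) *
            ∏ i, (1 + C (γ i) * X) := by ring
      _ = d⁄dX R g * ∏ i, (1 + C (γ i) * X) := by rw [hkey]
  have h0 : constantCoeff (∏ i, (1 + C (γ i) * X)) = constantCoeff (pexp g) := by
    rw [constantCoeff_pexp, map_prod]
    simp
  exact ode_unique h0 hy (derivative_pexp hg0)
end

section
/- Let R be a commutative ring, n ≥ 1, a₁,…,a_n ∈ R, and Ω̃(t) = t^n + a₁ t^{n−1} + ⋯ + a_n, regarded as a unit of the ring R((t^{−1})) of formal Laurent series in t^{−1}. Let r₀ be an integer and suppose Ψ ∈ R((t^{−1})) and elements σ_r^k ∈ R (for integers r ≤ r₀ and 0 ≤ k ≤ n−1) satisfy Ψ = Σ_{r ≤ r₀} (Σ_{k=0}^{n−1} σ_r^k t^k) Ω̃(t)^r, where for each power of t only finitely many summands contribute so the sum is well defined. Then for every r ≤ r₀ and every 1 ≤ k ≤ n: σ_r^{n−k} = Σ_{i=1}^k a_{k−i} C_r^i, where a₀ := 1 and C_r^i denotes the coefficient of t^{−i} in Ψ · Ω̃(t)^{−r−1}.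 -/
open HahnSeries

section Aux

variable {R : Type*} [CommRing R]

private lemma aux_coeff_sum {ι : Type*} (s : Finset ι) (f : ι → HahnSeries ℤ R) (g : ℤ) :
    (∑ i ∈ s, f i).coeff g = ∑ i ∈ s, (f i).coeff g := by
  classical
  induction s using Finset.induction with
  | empty => simp
  | insert _ _ h ih => simp [Finset.sum_insert h, ih]

private lemma aux_mul_coeff_zero_of_lt {x y : HahnSeries ℤ R} {cx cy g : ℤ}
    (hx : ∀ g' < cx, x.coeff g' = 0) (hy : ∀ g' < cy, y.coeff g' = 0)
    (hg : g < cx + cy) : (x * y).coeff g = 0 := by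
  by_contra h
  obtain ⟨i, hi, j, hj, hij⟩ := support_mul_subset ((mem_support _ _).2 h)
  have hij' : i + j = g := hij
  have h1 : cx ≤ i := not_lt.1 fun hlt => hi (hx i hlt)
  have h2 : cy ≤ j := not_lt.1 fun hlt => hj (hy j hlt)
  omega

private lemma aux_mul_coeff_zero_of_gt {x y : HahnSeries ℤ R} {cx cy g : ℤ}
    (hx : ∀ g' > cx, x.coeff g' = 0) (hy : ∀ g' > cy, y.coeff g' = 0)
    (hg : cx + cy < g) : (x * y).coeff g = 0 := by
  by_contra h
  obtain ⟨i, hi, j, hj, hij⟩ := support_mul_subset ((mem_support _ _).2 h)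
  have hij' : i + j = g := hij
  have h1 : i ≤ cx := not_lt.1 fun hlt => hi (hx i hlt)
  have h2 : j ≤ cy := not_lt.1 fun hlt => hj (hy j hlt)
  omega

end Aux

set_option maxHeartbeats 1000000 in
theorem stmt_15 {R : Type*} [CommRing R] (n : ℕ) (hn : 1 ≤ n)
    (a : ℕ → R) (ha0 : a 0 = 1)
    (Ωu : (LaurentSeries R)ˣ)
    (hΩ : (Ωu : LaurentSeries R) =
      ∑ j ∈ Finset.range (n + 1), HahnSeries.single ((j : ℤ) - (n : ℤ)) (a j))
    (r₀ : ℤ) (σ : ℤ → ℕ → R) (Ψ : LaurentSeries R)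
    (fam : HahnSeries.SummableFamily ℤ R ℕ)
    (hfam : ∀ j : ℕ, fam j =
      (∑ k ∈ Finset.range n, HahnSeries.single (-(k : ℤ)) (σ (r₀ - j) k)) *
        ((Ωu ^ (r₀ - (j : ℤ)) : (LaurentSeries R)ˣ) : LaurentSeries R))
    (hΨ : Ψ = fam.hsum)
    (r : ℤ) (hr : r ≤ r₀) (k : ℕ) (hk1 : 1 ≤ k) (hkn : k ≤ n) :
    σ r (n - k) = ∑ i ∈ Finset.Icc 1 k,
      a (k - i) *
        (Ψ * ((Ωu ^ (-r - 1) : (LaurentSeries R)ˣ) : LaurentSeries R)).coeff (i : ℤ) := by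
  classical
  set Ω : LaurentSeries R := (Ωu : LaurentSeries R) with hΩdef
  set v : LaurentSeries R := ((Ωu⁻¹ : (LaurentSeries R)ˣ) : LaurentSeries R) with hvdef
  -- coefficient bounds for Ω
  have hΩ_lt : ∀ g : ℤ, g < -(n : ℤ) → Ω.coeff g = 0 := by
    intro g hg
    rw [hΩ, aux_coeff_sum]
    exact Finset.sum_eq_zero fun j hj => coeff_single_of_ne (by omega)
  have hΩ_gt : ∀ g : ℤ, 0 < g → Ω.coeff g = 0 := by
    intro g hg
    rw [hΩ, aux_coeff_sum]
    refine Finset.sum_eq_zero fun j hj => coeff_single_of_ne ?_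
    simp only [Finset.mem_range] at hj
    omega
  -- the coefficient of Ω * y
  have hΩmul : ∀ (y : LaurentSeries R) (g : ℤ),
      (Ω * y).coeff g = ∑ j ∈ Finset.range (n + 1), a j * y.coeff (g - ((j : ℤ) - n)) := by
    intro y g
    rw [hΩ, Finset.sum_mul, aux_coeff_sum]
    refine Finset.sum_congr rfl fun j _ => ?_
    have hgr : g = (g - ((j : ℤ) - n)) + ((j : ℤ) - n) := by ring
    conv_lhs => rw [hgr]
    rw [coeff_single_mul_add]
  -- coefficient bound for v = Ω⁻¹
  have hv_lt : ∀ g : ℤ, g < (n : ℤ) → v.coeff g = 0 := by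
    intro g hg
    by_cases hv0 : v = 0
    · simp [hv0]
    by_contra hne
    have hle : v.order ≤ g := order_le_of_coeff_ne_zero hne
    have hvo : v.coeff v.order ≠ 0 := fun h => hv0 (coeff_order_eq_zero.1 h)
    have h1 : (Ω * v) = 1 := by
      rw [hΩdef, hvdef, ← Units.val_mul, mul_inv_cancel, Units.val_one]
    have hcoeff : (Ω * v).coeff (v.order - (n : ℤ)) = v.coeff v.order := by
      rw [hΩmul]
      rw [Finset.sum_eq_single 0]
      · rw [ha0, one_mul]
        congr 1
        push_cast
        ring
      · intro j hj hj0
        have h2 : v.coeff (v.order - (n:ℤ) - ((j:ℤ) - n)) = 0 := by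
          apply coeff_eq_zero_of_lt_order
          have : (0:ℤ) < j := by exact_mod_cast Nat.pos_of_ne_zero hj0
          omega
        rw [h2, mul_zero]
      · intro h; exact absurd (Finset.mem_range.2 (by omega)) h
    rw [h1] at hcoeff
    have hzero : ((1 : LaurentSeries R)).coeff (v.order - (n : ℤ)) = 0 := by
      rw [coeff_one, if_neg (by omega)]
    rw [hzero] at hcoeff
    exact hvo hcoeff.symm
  -- powers
  have hΩpow_gt : ∀ (m : ℕ) (g : ℤ), 0 < g → (Ω ^ m).coeff g = 0 := by
    intro m
    induction m with
    | zero => intro g hg; rw [pow_zero, coeff_one, if_neg (by omega)]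
    | succ m ih =>
      intro g hg
      rw [pow_succ]
      exact aux_mul_coeff_zero_of_gt (cx := 0) (cy := 0) ih hΩ_gt (by omega)
  have hvpow_lt : ∀ (m : ℕ) (g : ℤ), g < (n : ℤ) * m → (v ^ m).coeff g = 0 := by
    intro m
    induction m with
    | zero => intro g hg; simp at hg; rw [pow_zero, coeff_one, if_neg (by omega)]
    | succ m ih =>
      intro g hg
      rw [pow_succ]
      refine aux_mul_coeff_zero_of_lt (cx := (n : ℤ) * m) (cy := (n : ℤ)) ih hv_lt ?_
      push_cast at hg ⊢
      linarith
  -- zpow coefficient bounds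
  have hzpow_gt : ∀ (m : ℤ), 0 ≤ m → ∀ g : ℤ, 0 < g →
      ((Ωu ^ m : (LaurentSeries R)ˣ) : LaurentSeries R).coeff g = 0 := by
    intro m hm g hg
    have h : (Ωu ^ m : (LaurentSeries R)ˣ) = Ωu ^ m.toNat := by
      rw [← zpow_natCast, Int.toNat_of_nonneg hm]
    rw [h, Units.val_pow_eq_pow_val]
    exact hΩpow_gt m.toNat g hg
  have hzpow_lt : ∀ (m : ℤ), m < 0 → ∀ g : ℤ, g < (n : ℤ) * (-m) →
      ((Ωu ^ m : (LaurentSeries R)ˣ) : LaurentSeries R).coeff g = 0 := by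
    intro m hm g hg
    have h : (Ωu ^ m : (LaurentSeries R)ˣ) = (Ωu⁻¹) ^ (-m).toNat := by
      rw [← zpow_natCast, Int.toNat_of_nonneg (by omega), inv_zpow, ← zpow_neg, neg_neg]
    have hc : (((-m).toNat : ℤ)) = -m := Int.toNat_of_nonneg (by omega)
    rw [h, Units.val_pow_eq_pow_val, ← hvdef]
    exact hvpow_lt (-m).toNat g (by rw [hc]; exact hg)
  -- the polynomial parts
  set P : ℤ → LaurentSeries R :=
    fun s => ∑ k' ∈ Finset.range n, HahnSeries.single (-(k' : ℤ)) (σ s k') with hPdef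
  have hPs : ∀ s : ℤ,
      (∑ k' ∈ Finset.range n, HahnSeries.single (-(k' : ℤ)) (σ s k')) = P s := fun s => rfl
  have hP_gt : ∀ s : ℤ, ∀ g : ℤ, 0 < g → (P s).coeff g = 0 := by
    intro s g hg
    rw [← hPs s, aux_coeff_sum]
    exact Finset.sum_eq_zero fun j hj => coeff_single_of_ne (by omega)
  have hP_lt : ∀ s : ℤ, ∀ g : ℤ, g < 1 - (n : ℤ) → (P s).coeff g = 0 := by
    intro s g hg
    rw [← hPs s, aux_coeff_sum]
    refine Finset.sum_eq_zero fun j hj => coeff_single_of_ne ?_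
    simp only [Finset.mem_range] at hj
    omega
  set Q : LaurentSeries R := P r * v with hQdef
  have hQ_lt : ∀ g : ℤ, g < 1 → Q.coeff g = 0 := by
    intro g hg
    exact aux_mul_coeff_zero_of_lt (cx := 1 - (n : ℤ)) (cy := (n : ℤ)) (hP_lt r) hv_lt (by omega)
  -- step 1 : coefficients of Ψ * Ω^{-r-1} agree with Q in range
  set W : LaurentSeries R := ((Ωu ^ (-r - 1) : (LaurentSeries R)ˣ) : LaurentSeries R) with hWdef
  set jstar : ℕ := (r₀ - r).toNat with hjdef
  have hjstar : (jstar : ℤ) = r₀ - r := Int.toNat_of_nonneg (by omega)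
  have hkey1 : ∀ i : ℕ, 1 ≤ i → i ≤ k → (Ψ * W).coeff (i : ℤ) = Q.coeff (i : ℤ) := by
    intro i hi1 hik
    have hΨW : Ψ * W = (W • fam).hsum := by
      rw [HahnSeries.SummableFamily.hsum_smul, ← hΨ, mul_comm]
    rw [hΨW, HahnSeries.SummableFamily.coeff_hsum]
    have happ : ∀ j : ℕ, ((W • fam) j) = W * fam j := by
      intro j
      rw [HahnSeries.SummableFamily.smul_apply, HahnSeries.of_symm_smul_of_eq_mul]
    have hmain : (W * fam jstar) = Q := by
      have hrr : r₀ - (r₀ - r) = r := by ring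
      rw [hfam jstar, hjstar, hPs, hrr]
      have he : r + (-r - 1) = -1 := by ring
      have hu : (Ωu ^ r : (LaurentSeries R)ˣ) * Ωu ^ (-r - 1) = Ωu⁻¹ := by
        rw [← zpow_add, he, zpow_neg_one]
      calc W * (P r * ((Ωu ^ r : (LaurentSeries R)ˣ) : LaurentSeries R))
          = P r * (((Ωu ^ r : (LaurentSeries R)ˣ) : LaurentSeries R) * W) := by
            rw [mul_comm W, mul_assoc]
        _ = Q := by
            rw [hWdef, ← Units.val_mul, hu, hQdef, hvdef]
    rw [finsum_eq_single _ jstar]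
    · rw [happ, hmain]
    · intro j hj
      rw [happ, hfam j, hPs]
      have he : r₀ - (j : ℤ) + (-r - 1) = r₀ - (j : ℤ) - r - 1 := by ring
      have hcomb : W * (P (r₀ - j) * ((Ωu ^ (r₀ - (j : ℤ)) : (LaurentSeries R)ˣ) : LaurentSeries R))
          = P (r₀ - j) * ((Ωu ^ (r₀ - (j : ℤ) - r - 1) : (LaurentSeries R)ˣ) : LaurentSeries R) := by
        calc W * (P (r₀ - j) * ((Ωu ^ (r₀ - (j : ℤ)) : (LaurentSeries R)ˣ) : LaurentSeries R))
            = P (r₀ - j) * (((Ωu ^ (r₀ - (j : ℤ)) : (LaurentSeries R)ˣ) : LaurentSeries R) * W) := by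
              rw [mul_comm W, mul_assoc]
          _ = _ := by rw [hWdef, ← Units.val_mul, ← zpow_add, he]
      rw [hcomb]
      set m : ℤ := r₀ - (j : ℤ) - r - 1 with hmdef
      rcases le_or_gt 0 m with hm | hm
      · exact aux_mul_coeff_zero_of_gt (cx := 0) (cy := 0) (hP_gt _) (hzpow_gt m hm)
          (by exact_mod_cast hi1)
      · have hj2 : (jstar : ℤ) < j := by
          rcases lt_or_gt_of_ne hj with h | h
          · exfalso
            have : (j : ℤ) < jstar := by exact_mod_cast h
            omega
          · exact_mod_cast h
        have hm2 : m ≤ -2 := by omega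
        refine aux_mul_coeff_zero_of_lt (cx := 1 - (n : ℤ)) (cy := (n : ℤ) * (-m))
          (hP_lt _) (hzpow_lt m hm) ?_
        have h2n : (2 : ℤ) * n ≤ (n : ℤ) * (-m) := by
          nlinarith [hm2, (by exact_mod_cast hn : (1:ℤ) ≤ n)]
        have hik' : (i : ℤ) ≤ k := by exact_mod_cast hik
        have hkn' : (k : ℤ) ≤ n := by exact_mod_cast hkn
        omega
  -- step 2 : σ r (n-k) via P r = Ω * Q
  have hPQ : P r = Ω * Q := by
    have h : Ω * Q = P r * (v * Ω) := by rw [hQdef, mul_left_comm, mul_comm Ω v]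
    rw [h, hvdef, hΩdef, ← Units.val_mul, inv_mul_cancel, Units.val_one, mul_one]
  have hσ : σ r (n - k) = (P r).coeff ((k : ℤ) - n) := by
    rw [← hPs r, aux_coeff_sum]
    rw [Finset.sum_eq_single (n - k)]
    · have h : ((k : ℤ) - n) = -(((n - k : ℕ) : ℤ)) := by omega
      rw [h, coeff_single_same]
    · intro j hj hjne
      simp only [Finset.mem_range] at hj
      exact coeff_single_of_ne (by omega)
    · intro h; exact absurd (Finset.mem_range.2 (by omega)) h
  have hstep2 : σ r (n - k) = ∑ j ∈ Finset.range k, a j * Q.coeff ((k : ℤ) - j) := by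
    rw [hσ, hPQ, hΩmul]
    rw [← Finset.sum_subset (Finset.range_subset_range.2 (by omega : k ≤ n + 1))]
    · refine Finset.sum_congr rfl fun j hj => ?_
      congr 2
      ring
    · intro j hj hjk
      simp only [Finset.mem_range, not_lt] at hjk
      have h : Q.coeff ((k : ℤ) - n - ((j : ℤ) - n)) = 0 := by
        apply hQ_lt
        have : (k : ℤ) ≤ j := by exact_mod_cast hjk
        omega
      rw [h, mul_zero]
  rw [hstep2]
  rw [Finset.sum_bij' (fun j _ => k - j) (fun i _ => k - i)]
  · intro j hj
    simp only [Finset.mem_range] at hj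
    exact Finset.mem_Icc.2 ⟨by omega, by omega⟩
  · intro i hi
    simp only [Finset.mem_Icc] at hi
    exact Finset.mem_range.2 (by omega)
  · intro j hj; simp only [Finset.mem_range] at hj; omega
  · intro i hi; simp only [Finset.mem_Icc] at hi; omega
  · intro j hj
    simp only [Finset.mem_range] at hj
    have h1 : k - (k - j) = j := by omega
    have h2 : ((k - j : ℕ) : ℤ) = (k : ℤ) - j := by omega
    rw [h1, ← h2, ← hkey1 (k - j) (by omega) (by omega)]
end

section
/- Let g ≥ 2 and n ≥ 2 be integers, set ḡ = g−1, let δ be an integer with 0 < δ < n and 2δ ≠ n, and set d = 2nḡ + δ. Consider all integers P ≥ 2, positive integers n₁,…,n_P with Σ_p n_p = n, and integers d₁,…,d_P with Σ_p d_p = d and d₁/n₁ > d₂/n₂ > ⋯ > d_P/n_P. Then the minimum over all such data of Σ_{1≤j<i≤P} (n_i d_j − n_j d_i + n_i n_j ḡ) is attained and equals δ + (n−1)ḡ if 2δ < n, and n − δ + (n−1)ḡ if 2δ > n. -/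
open Finset

lemma aux_min_16 (n δ G k s : ℤ) (hn : 2 ≤ n) (hG : 1 ≤ G)
    (hδ0 : 0 < δ) (hδn : δ < n) (hhalf : 2 * δ ≠ n)
    (hk1 : 1 ≤ k) (hk2 : k ≤ n - 1) (hs : 0 < s) (hd : n ∣ s + k * δ) :
    min δ (n - δ) + (n - 1) * G ≤ s + k * (n - k) * G := by
  obtain ⟨m, hm⟩ := hd
  rcases eq_or_lt_of_le hk1 with h1 | h1
  · -- k = 1
    have hk : k = 1 := h1.symm
    subst hk
    have hm1 : 1 ≤ m := by nlinarith
    have hs' : n - δ ≤ s := by nlinarith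
    have : min δ (n - δ) ≤ n - δ := min_le_right _ _
    nlinarith
  rcases eq_or_lt_of_le hk2 with h2 | h2
  · -- k = n - 1
    have hk : k = n - 1 := h2
    subst hk
    have hm' : s - δ = n * (m - δ) := by linarith [hm]
    have hm0 : 0 ≤ m - δ := by
      by_contra h
      push_neg at h
      have : m - δ ≤ -1 := by omega
      nlinarith
    have hs' : δ ≤ s := by nlinarith
    have : min δ (n - δ) ≤ δ := min_le_left _ _
    nlinarith
  · -- interior: 2 ≤ k ≤ n - 2
    have hk2' : k ≤ n - 2 := by omega
    have hk1' : 2 ≤ k := by omega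
    have hmin : 2 * min δ (n - δ) ≤ n - 1 := by omega
    have hq : 2 * (n - 2) ≤ k * (n - k) := by
      nlinarith [mul_nonneg (by omega : (0:ℤ) ≤ k - 2) (by omega : (0:ℤ) ≤ n - 2 - k)]
    nlinarith

theorem stmt_16 (g n δ : ℤ) (hg : 2 ≤ g) (hn : 2 ≤ n) (hδ0 : 0 < δ) (hδn : δ < n)
    (hδhalf : 2 * δ ≠ n) :
    IsLeast
      {c : ℤ | ∃ P : ℕ, 2 ≤ P ∧ ∃ nn dd : Fin P → ℤ,
        (∀ p, 0 < nn p) ∧ (∑ p, nn p = n) ∧ (∑ p, dd p = 2 * n * (g - 1) + δ) ∧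
        (∀ p q : Fin P, p < q → (dd q : ℚ) / (nn q : ℚ) < (dd p : ℚ) / (nn p : ℚ)) ∧
        c = ∑ i : Fin P, ∑ j ∈ univ.filter (· < i),
          (nn i * dd j - nn j * dd i + nn i * nn j * (g - 1))}
      (if 2 * δ < n then δ + (n - 1) * (g - 1) else n - δ + (n - 1) * (g - 1)) := by
  have hgq : (2:ℚ) ≤ (g:ℚ) := by exact_mod_cast hg
  have hnq : (2:ℚ) ≤ (n:ℚ) := by exact_mod_cast hn
  constructor
  · -- membership
    split_ifs with hcase
    · refine ⟨2, le_refl 2, ![n - 1, 1], ![2 * (n - 1) * (g - 1) + δ, 2 * (g - 1)],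
        ?_, ?_, ?_, ?_, ?_⟩
      · intro p; fin_cases p <;> simp <;> omega
      · simp [Fin.sum_univ_two]
      · simp [Fin.sum_univ_two]; ring
      · intro p q hpq
        fin_cases p <;> fin_cases q <;> simp_all
        rw [lt_div_iff₀ (by linarith)]
        have : (0:ℚ) < (δ:ℚ) := by exact_mod_cast hδ0
        nlinarith
      · simp [Finset.sum_filter, Fin.sum_univ_two]
        ring
    · refine ⟨2, le_refl 2, ![1, n - 1], ![2 * (g - 1) + 1, 2 * (n - 1) * (g - 1) + δ - 1],
        ?_, ?_, ?_, ?_, ?_⟩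
      · intro p; fin_cases p <;> simp <;> omega
      · simp [Fin.sum_univ_two]
      · simp [Fin.sum_univ_two]; ring
      · intro p q hpq
        fin_cases p <;> fin_cases q <;> simp_all
        rw [div_lt_iff₀ (by linarith)]
        have : (δ:ℚ) < (n:ℚ) := by exact_mod_cast hδn
        nlinarith
      · simp [Finset.sum_filter, Fin.sum_univ_two]
        ring
  · -- lower bound
    rintro c ⟨P, hP, nn, dd, hpos, hsn, hsd, hslope, rfl⟩
    haveI : NeZero P := ⟨by omega⟩
    have hG : 1 ≤ g - 1 := by omega
    -- key slope inequality
    have key : ∀ i j : Fin P, j < i → 1 ≤ nn i * dd j - nn j * dd i := by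
      intro i j hji
      have hs := hslope j i hji
      have hi : (0:ℚ) < (nn i : ℚ) := by exact_mod_cast hpos i
      have hj : (0:ℚ) < (nn j : ℚ) := by exact_mod_cast hpos j
      rw [div_lt_div_iff₀ hi hj] at hs
      have : (nn j : ℚ) * (dd i : ℚ) < (nn i : ℚ) * (dd j : ℚ) := by ring_nf; ring_nf at hs; linarith
      have hZ : nn j * dd i < nn i * dd j := by exact_mod_cast this
      omega
    have tnonneg : ∀ i j : Fin P, j < i →
        0 ≤ nn i * dd j - nn j * dd i + nn i * nn j * (g - 1) := by
      intro i j hji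
      have h1 := key i j hji
      have h2 : 0 ≤ nn i * nn j * (g - 1) :=
        mul_nonneg (mul_nonneg (hpos i).le (hpos j).le) (by omega)
      linarith
    set i1 : Fin P := ⟨1, by omega⟩ with hi1def
    have hi1pos : (0 : Fin P) < i1 := by
      rw [Fin.lt_def]
      simp [hi1def]
    have hi1ne : i1 ≠ 0 := by
      intro h
      rw [Fin.ext_iff] at h
      simp [hi1def] at h
    have h1mem : i1 ∈ univ.erase (0 : Fin P) := Finset.mem_erase.mpr ⟨hi1ne, mem_univ _⟩
    have hA : ∑ i ∈ univ.erase (0 : Fin P), nn i = n - nn 0 := by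
      have h := Finset.sum_erase_add univ nn (mem_univ (0 : Fin P))
      rw [hsn] at h
      linarith
    have hB : ∑ i ∈ univ.erase (0 : Fin P), dd i = (2 * n * (g - 1) + δ) - dd 0 := by
      have h := Finset.sum_erase_add univ dd (mem_univ (0 : Fin P))
      rw [hsd] at h
      linarith
    have herase : (univ.erase (0:Fin P)) = univ.filter (fun i => (0:Fin P) < i) := by
      ext i
      simp [Fin.pos_iff_ne_zero']
    have step : ∑ i ∈ univ.erase (0:Fin P),
          (nn i * dd 0 - nn 0 * dd i + nn i * nn 0 * (g-1))
        ≤ ∑ i : Fin P, ∑ j ∈ univ.filter (· < i),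
          (nn i * dd j - nn j * dd i + nn i * nn j * (g - 1)) := by
      rw [herase, Finset.sum_filter]
      apply Finset.sum_le_sum
      intro i _
      split_ifs with h
      · exact Finset.single_le_sum (fun j hj => tnonneg i j (Finset.mem_filter.mp hj).2)
          (Finset.mem_filter.mpr ⟨mem_univ _, h⟩)
      · exact Finset.sum_nonneg (fun j hj => tnonneg i j (Finset.mem_filter.mp hj).2)
    have hsum : ∑ i ∈ univ.erase (0:Fin P),
          (nn i * dd 0 - nn 0 * dd i + nn i * nn 0 * (g-1))
        = (n * dd 0 - nn 0 * (2*n*(g-1)+δ)) + nn 0 * (n - nn 0) * (g-1) := by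
      calc ∑ i ∈ univ.erase (0:Fin P), (nn i * dd 0 - nn 0 * dd i + nn i * nn 0 * (g-1))
          = ∑ i ∈ univ.erase (0:Fin P), (nn i * (dd 0 + nn 0 * (g-1)) - nn 0 * dd i) :=
            Finset.sum_congr rfl (fun i _ => by ring)
        _ = (∑ i ∈ univ.erase (0:Fin P), nn i) * (dd 0 + nn 0*(g-1))
            - nn 0 * ∑ i ∈ univ.erase (0:Fin P), dd i := by
            rw [Finset.sum_sub_distrib, Finset.sum_mul, Finset.mul_sum]
        _ = (n * dd 0 - nn 0 * (2*n*(g-1)+δ)) + nn 0 * (n - nn 0) * (g-1) := by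
            rw [hA, hB]; ring
    have hss : ∑ i ∈ univ.erase (0:Fin P), (nn i * dd 0 - nn 0 * dd i)
        = n * dd 0 - nn 0 * (2*n*(g-1)+δ) := by
      calc ∑ i ∈ univ.erase (0:Fin P), (nn i * dd 0 - nn 0 * dd i)
          = (∑ i ∈ univ.erase (0:Fin P), nn i) * dd 0
            - nn 0 * ∑ i ∈ univ.erase (0:Fin P), dd i := by
            rw [Finset.sum_sub_distrib, Finset.sum_mul, Finset.mul_sum]
        _ = n * dd 0 - nn 0 * (2*n*(g-1)+δ) := by rw [hA, hB]; ring
    have hspos : 0 < n * dd 0 - nn 0 * (2*n*(g-1)+δ) := by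
      have hnon : ∀ j ∈ univ.erase (0:Fin P), 0 ≤ nn j * dd 0 - nn 0 * dd j := by
        intro j hj
        have hjne := (Finset.mem_erase.mp hj).1
        have := key j 0 ((Fin.pos_iff_ne_zero' j).mpr hjne)
        linarith
      have h1 : nn i1 * dd 0 - nn 0 * dd i1
          ≤ ∑ i ∈ univ.erase (0:Fin P), (nn i * dd 0 - nn 0 * dd i) :=
        Finset.single_le_sum hnon h1mem
      have h2 := key i1 0 hi1pos
      rw [hss] at h1
      linarith
    have hk2 : nn 0 ≤ n - 1 := by
      have hle : nn i1 ≤ ∑ i ∈ univ.erase (0:Fin P), nn i :=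
        Finset.single_le_sum (fun j _ => (hpos j).le) h1mem
      have := hpos i1
      rw [hA] at hle
      omega
    have hdvd : n ∣ (n * dd 0 - nn 0 * (2*n*(g-1)+δ)) + nn 0 * δ :=
      ⟨dd 0 - 2 * nn 0 * (g-1), by ring⟩
    have main := aux_min_16 n δ (g-1) (nn 0) (n * dd 0 - nn 0 * (2*n*(g-1)+δ))
      hn hG hδ0 hδn hδhalf (hpos 0) hk2 hspos hdvd
    have hgoal : (if 2*δ < n then δ + (n-1)*(g-1) else n - δ + (n-1)*(g-1))
        = min δ (n-δ) + (n-1)*(g-1) := by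
      split_ifs with h
      · rw [min_eq_left (by omega)]
      · rw [min_eq_right (by omega)]
    rw [hgoal]
    calc min δ (n-δ) + (n-1)*(g-1)
        ≤ (n * dd 0 - nn 0 * (2*n*(g-1)+δ)) + nn 0 * (n - nn 0) * (g-1) := by nlinarith [main]
      _ = ∑ i ∈ univ.erase (0:Fin P), (nn i * dd 0 - nn 0 * dd i + nn i * nn 0 * (g-1)) :=
          hsum.symm
      _ ≤ _ := step
end
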